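/- arXiv:2106.01737 — 7 statements merged into one kernel-verified Lean document; each statement's English description precedes it below -/
import Mathlib

section
/- For every β ∈ [1,2), G(β) ≥ −log₂(5/4). (Consequently q(n) ≤ 1.25^{n+o(n)} for all n.) -/
/-- The binary entropy function, `h(p) = p log₂(1/p) + (1-p) log₂(1/(1-p))`,
with the convention `h(0) = h(1) = 0` (automatic since `1/0 = 0` and `logb 2 0 = 0`). -/
noncomputable def binH (p : ℝ) : ℝ :=
  p * Real.logb 2 (1 / p) + (1 - p) * Real.logb 2 (1 / (1 - p))

/-- `(c, b) ∈ C(β)`: `c : ℕ → [0,1]`, `∑ cᵢ/2ⁱ = 1/(β·2ᵇ)` and `∑ cᵢ ≤ 1`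
(the latter expressed via partial sums, which is equivalent for nonnegative terms). -/
def memC (β : ℝ) (c : ℕ → ℝ) (b : ℕ) : Prop :=
  (∀ i, c i ∈ Set.Icc (0 : ℝ) 1) ∧
  (∑' i : ℕ, c i / 2 ^ i) = 1 / (β * 2 ^ b) ∧
  ∀ n : ℕ, (∑ i ∈ Finset.range n, c i) ≤ 1

/-- `α ∈ A(c,b)`: `α : ℕ → [0,1]` with `∑ αᵢ cᵢ / 2ⁱ = 1/(β·2^{b+1})`. -/
def memA (β : ℝ) (b : ℕ) (c α : ℕ → ℝ) : Prop :=
  (∀ i, α i ∈ Set.Icc (0 : ℝ) 1) ∧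
  (∑' i : ℕ, α i * c i / 2 ^ i) = 1 / (β * 2 ^ (b + 1))

/-- `P(c,α) = ∑ h(αᵢ)·cᵢ − h(∑ αᵢ·cᵢ)`. -/
noncomputable def Pfun (c α : ℕ → ℝ) : ℝ :=
  (∑' i : ℕ, binH (α i) * c i) - binH (∑' i : ℕ, α i * c i)

/-- `sup_{α ∈ A(c,b)} P(c,α)`. -/
noncomputable def supP (β : ℝ) (b : ℕ) (c : ℕ → ℝ) : ℝ :=
  sSup {y | ∃ α, memA β b c α ∧ y = Pfun c α}

/-- `G(β) = inf_{(c,b) ∈ C(β)} sup_{α ∈ A(c,b)} P(c,α)`. -/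
noncomputable def Gfun (β : ℝ) : ℝ :=
  sInf {y | ∃ c b, memC β c b ∧ y = supP β b c}

/-! For every admissible `c`, the constant sequence `α ≡ 1/2` lies in `A(c,b)`, since it halves
`∑ cᵢ/2ⁱ`, and `P(c, α) = S - h(S/2)` with `S = ∑ cᵢ ∈ [0,1]`. Gibbs' inequality against the
distribution `(1/5, 4/5)` gives the tangent-line bound `h(p) ≤ 2p + log₂(5/4)` at `p = 1/5`,
hence `P(c, α) ≥ -log₂(5/4)`. -/

open Real

lemma mul_log_div_le_sub {x y : ℝ} (hx : 0 ≤ x) (hy : 0 < y) : x * log (y / x) ≤ y - x := by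
  rcases hx.eq_or_lt with rfl | hx
  · simpa using hy.le
  have := mul_le_mul_of_nonneg_left (log_le_sub_one_of_pos (div_pos hy hx)) hx.le
  rwa [mul_sub, mul_div_cancel₀ _ hx.ne', mul_one] at this

lemma mul_logb_inv_le {p q : ℝ} (hp : 0 ≤ p) (hq : 0 < q) :
    p * logb 2 (1 / p) ≤ p * logb 2 (1 / q) + (q - p) / log 2 := by
  have hlog2 : 0 < log 2 := log_pos one_lt_two
  rcases hp.eq_or_lt with rfl | hp
  · simp only [zero_mul, zero_add, sub_zero]; positivity
  have key := mul_log_div_le_sub hp.le hq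
  rw [log_div hq.ne' hp.ne'] at key
  simp only [one_div, logb, log_inv]
  rw [← mul_div_assoc, ← mul_div_assoc, ← add_div, div_le_div_iff_of_pos_right hlog2]
  linarith

lemma binH_le_crossEntropy {p q : ℝ} (hp : p ∈ Set.Icc (0 : ℝ) 1) (hq : q ∈ Set.Ioo (0 : ℝ) 1) :
    binH p ≤ p * logb 2 (1 / q) + (1 - p) * logb 2 (1 / (1 - q)) := by
  have h₁ := mul_logb_inv_le hp.1 hq.1
  have h₂ := mul_logb_inv_le (sub_nonneg.2 hp.2) (sub_pos.2 hq.2)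
  have : (q - p) / log 2 + (1 - q - (1 - p)) / log 2 = 0 := by ring
  unfold binH
  linarith

lemma binH_le_two_mul_add_logb_five_fourths {p : ℝ} (hp : p ∈ Set.Icc (0 : ℝ) 1) :
    binH p ≤ 2 * p + logb 2 (5 / 4) := by
  have h := binH_le_crossEntropy hp (q := 1 / 5) ⟨by norm_num, by norm_num⟩
  have h5 : logb 2 5 = 2 + logb 2 (5 / 4) := by
    rw [logb_div (by norm_num) (by norm_num), show (4 : ℝ) = 2 ^ 2 by norm_num, logb_pow,
      logb_self_eq_one one_lt_two]
    ring
  norm_num at h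
  rw [h5] at h
  linarith

lemma binH_one_half : binH (1 / 2) = 1 := by
  norm_num [binH, logb_self_eq_one]

/-- The hypothesis `a ≤ 0` covers the junk value `sSup s = 0` of an unbounded `s`. -/
lemma Real.le_sSup_of_le_of_mem {s : Set ℝ} {a x : ℝ} (hax : a ≤ x) (hxs : x ∈ s) (ha : a ≤ 0) :
    a ≤ sSup s := by
  by_cases h : BddAbove s
  · exact hax.trans (le_csSup h hxs)
  · rwa [Real.sSup_of_not_bddAbove h]

lemma memA_const_one_half {β : ℝ} {c : ℕ → ℝ} {b : ℕ} (hc : memC β c b) :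
    memA β b c (fun _ => 1 / 2) := by
  refine ⟨fun _ => ⟨by norm_num, by norm_num⟩, ?_⟩
  simp_rw [mul_div_assoc]
  rw [tsum_mul_left, hc.2.1, pow_succ]
  ring

lemma Pfun_const_one_half (c : ℕ → ℝ) :
    Pfun c (fun _ => 1 / 2) = ∑' i, c i - binH ((∑' i, c i) / 2) := by
  simp only [Pfun, binH_one_half, one_mul, tsum_mul_left]
  ring_nf

lemma tsum_mem_Icc_of_memC {β : ℝ} {c : ℕ → ℝ} {b : ℕ} (hc : memC β c b) :
    ∑' i, c i ∈ Set.Icc (0 : ℝ) 1 :=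
  ⟨tsum_nonneg fun i => (hc.1 i).1, Real.tsum_le_of_sum_range_le (fun i => (hc.1 i).1) hc.2.2⟩

lemma neg_logb_five_fourths_le_Pfun_const_one_half {β : ℝ} {c : ℕ → ℝ} {b : ℕ}
    (hc : memC β c b) : -logb 2 (5 / 4) ≤ Pfun c (fun _ => 1 / 2) := by
  obtain ⟨hS₀, hS₁⟩ := tsum_mem_Icc_of_memC hc
  have := binH_le_two_mul_add_logb_five_fourths (p := (∑' i, c i) / 2) ⟨by linarith, by linarith⟩
  rw [Pfun_const_one_half]
  linarith

theorem G_ge_neg_log_five_fourths_general (β : ℝ) :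
    -(Real.logb 2 (5 / 4)) ≤ Gfun β := by
  have hneg : -logb 2 (5 / 4) ≤ 0 := neg_nonpos.2 (logb_nonneg one_lt_two (by norm_num))
  refine Real.le_sInf ?_ hneg
  rintro _ ⟨c, b, hc, rfl⟩
  exact Real.le_sSup_of_le_of_mem (neg_logb_five_fourths_le_Pfun_const_one_half hc)
    ⟨_, memA_const_one_half hc, rfl⟩ hneg

/-- `G(β) ≥ −log₂(5/4)` for every `β ∈ [1,2)`. -/
theorem G_ge_neg_log_five_fourths (β : ℝ) (hβ : β ∈ Set.Ico (1 : ℝ) 2) :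
    -(Real.logb 2 (5 / 4)) ≤ Gfun β :=
  G_ge_neg_log_five_fourths_general β
end

section
/- There exists an absolute constant C₀ > 0 such that the following holds. Let β = 5/4 + δ ∈ [1,2) with δ ≠ 0, and set δ₀ = |δ|/100. Let b ∈ ℕ and let c : ℕ → [0,1] satisfy (c,b) ∈ C(β), and write x = ∑_{i=0}^∞ c_i. If |x − 2/5| ≤ δ₀ and x ≥ 1/(β·2^b), then there exists I ∈ ℕ such that x − 2^{I−b}/β ≥ C₀·|δ| and x − 2^{I+1−b}/β ≤ −C₀·|δ|. -/
set_option maxHeartbeats 1000000 in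
/-- Technical lemma: if `β = 5/4 + δ`, `δ ≠ 0`, `(c,b) ∈ C(β)`, `x = ∑ cᵢ` is within
`|δ|/100` of `2/5` and `x ≥ 1/(β·2ᵇ)`, then there is `I ∈ ℕ` with
`x − 2^{I−b}/β ≥ C₀|δ|` and `x − 2^{I+1−b}/β ≤ −C₀|δ|`, for an absolute `C₀ > 0`. -/
theorem exists_good_index :
    ∃ C₀ > (0 : ℝ), ∀ δ : ℝ, δ ≠ 0 → (5 / 4 + δ) ∈ Set.Ico (1 : ℝ) 2 →
      ∀ b : ℕ, ∀ c : ℕ → ℝ, memC (5 / 4 + δ) c b →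
        |(∑' i : ℕ, c i) - 2 / 5| ≤ |δ| / 100 →
        1 / ((5 / 4 + δ) * 2 ^ b) ≤ (∑' i : ℕ, c i) →
        ∃ I : ℕ,
          C₀ * |δ| ≤ (∑' i : ℕ, c i) - (2 : ℝ) ^ ((I : ℤ) - (b : ℤ)) / (5 / 4 + δ) ∧
          (∑' i : ℕ, c i) - (2 : ℝ) ^ ((I : ℤ) + 1 - (b : ℤ)) / (5 / 4 + δ) ≤
            -(C₀ * |δ|) := by
  refine ⟨1/100, by norm_num, ?_⟩
  intro δ hδ hβ b c _hc hx hxl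
  obtain ⟨hβ1, hβ2⟩ := hβ
  set x := ∑' i : ℕ, c i with hxdef
  have hβpos : (0:ℝ) < 5/4 + δ := by linarith
  have hδle : |δ| ≤ 3/4 := by rw [abs_le]; constructor <;> linarith
  have hδpos : 0 < |δ| := abs_pos.mpr hδ
  have hxab := abs_le.mp hx
  have hx1 : x ≤ 2/5 + |δ|/100 := by linarith [hxab.2]
  have hx2 : 2/5 - |δ|/100 ≤ x := by linarith [hxab.1]
  have hxlt : x < 1/2 := by linarith
  have h2βpos : (0:ℝ) < 2*(5/4+δ) := by linarith
  have hkey : |δ|/5 ≤ |2/5 - 1/(2*(5/4+δ))| := by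
    have h1 : 1/(2*(5/4+δ)) * (2*(5/4+δ)) = 1 := one_div_mul_cancel (ne_of_gt h2βpos)
    have hq : (2/5 - 1/(2*(5/4+δ))) * (10*(5/4+δ)) = 4*δ := by
      linear_combination -5 * h1
    have hq2 : |2/5 - 1/(2*(5/4+δ))| * (10*(5/4+δ)) = 4*|δ| := by
      rw [← abs_of_pos (show (0:ℝ) < 10*(5/4+δ) by linarith), ← abs_mul, hq, abs_mul]
      norm_num
    nlinarith [abs_nonneg (2/5 - 1/(2*(5/4+δ)))]
  have hmargin : 19*|δ|/100 ≤ |x - 1/(2*(5/4+δ))| := by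
    have htri := abs_sub_le (2/5 : ℝ) x (1/(2*(5/4+δ)))
    have hcomm : |2/5 - x| = |x - 2/5| := abs_sub_comm _ _
    linarith
  rcases le_or_gt (1/(2*(5/4+δ))) x with hcase | hcase
  · -- Case A: x ≥ 1/(2β); take I = b - 1
    have hb1 : 1 ≤ b := by
      by_contra h
      push_neg at h
      interval_cases b
      have hlt : (1:ℝ)/2 < 1/((5/4+δ) * 2^0) := by
        rw [div_lt_div_iff₀ (by norm_num) (by simpa using hβpos)]
        norm_num
        linarith
      linarith
    refine ⟨b - 1, ?_, ?_⟩
    · have he : ((b-1:ℕ):ℤ) - (b:ℤ) = -1 := by omega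
      rw [he]
      have h2 : (2:ℝ)^(-1:ℤ) = 1/2 := by norm_num
      rw [h2]
      rw [div_div]
      have habs : |x - 1/(2*(5/4+δ))| = x - 1/(2*(5/4+δ)) := abs_of_nonneg (by linarith)
      rw [habs] at hmargin
      linarith
    · have he : ((b-1:ℕ):ℤ) + 1 - (b:ℤ) = 0 := by omega
      rw [he]
      have h2 : (2:ℝ)^(0:ℤ) = 1 := by norm_num
      rw [h2]
      have h12 : (1:ℝ)/2 ≤ 1/(5/4+δ) := by
        rw [div_le_div_iff₀ (by norm_num) hβpos]
        linarith
      linarith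
  · -- Case B: x < 1/(2β); take I = b - 2
    have hb2 : 2 ≤ b := by
      by_contra h
      push_neg at h
      have hp2 : (2:ℝ)^b ≤ 2 := by
        interval_cases b <;> norm_num
      have hmul : (5/4+δ) * 2^b ≤ 2*(5/4+δ) := by
        rw [mul_comm 2 (5/4+δ)]
        exact mul_le_mul_of_nonneg_left hp2 (le_of_lt hβpos)
      have hle : 1/(2*(5/4+δ)) ≤ 1/((5/4+δ) * 2^b) :=
        one_div_le_one_div_of_le (mul_pos hβpos (pow_pos two_pos b)) hmul
      linarith
    refine ⟨b - 2, ?_, ?_⟩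
    · have he : ((b-2:ℕ):ℤ) - (b:ℤ) = -2 := by omega
      rw [he]
      have h2 : (2:ℝ)^(-2:ℤ) = 1/4 := by norm_num
      rw [h2]
      have h14 : (1/4:ℝ)/(5/4+δ) ≤ 1/4 := by
        rw [div_le_iff₀ hβpos]
        linarith
      linarith
    · have he : ((b-2:ℕ):ℤ) + 1 - (b:ℤ) = -1 := by omega
      rw [he]
      have h2 : (2:ℝ)^(-1:ℤ) = 1/2 := by norm_num
      rw [h2]
      rw [div_div]
      have habs : |x - 1/(2*(5/4+δ))| = -(x - 1/(2*(5/4+δ))) := abs_of_neg (by linarith)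
      rw [habs] at hmargin
      linarith
end

section
/- Let b ∈ ℕ and β ∈ [1,2). Let c : ℕ → [0,1] satisfy ∑_{i=0}^∞ c_i/2^i = 1/(β·2^b), and let α : ℕ → [0,1] satisfy ∑_{i=0}^∞ α_i·c_i/2^i = 1/(β·2^{b+1}). Then there exist indices s₁, s₂ ≤ 2^{b+4} (possibly s₁ = s₂) such that c_{s₁} > 1/2^{2(b+5)}, c_{s₂} > 1/2^{2(b+5)}, α_{s₁} > 1/2^{2(b+5)}, and α_{s₂} < 3/4. -/
/-!
Put `N = 2^(b+4)` and `ε = 1/2^(2(b+5))`. If a sequence `g` with values in `[0,1]` satisfies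
`g i ≤ ε` for all `i ≤ N`, then `∑ gᵢ/2ⁱ ≤ 2ε + 1/2^N ≤ 1/2^(b+3)`. Since
`S = ∑ cᵢ/2ⁱ > 1/2^(b+1)`, this cannot hold for `g = αc`, whose weighted sum is `S/2`; nor for
`g = c·[α < 3/4]`, because `c ≤ c·[α < 3/4] + (4/3)·αc` pointwise makes its weighted sum at
least `S - (2/3)S = S/3`.
-/

theorem ite_mem_Icc_zero_one {p : Prop} [Decidable p] {x : ℝ} (hx : x ∈ Set.Icc (0 : ℝ) 1) :
    (if p then x else 0) ∈ Set.Icc (0 : ℝ) 1 := by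
  split_ifs
  exacts [hx, Set.left_mem_Icc.2 zero_le_one]

section WeightedSum

variable {g : ℕ → ℝ}

theorem summable_div_two_pow (hg : ∀ i, g i ∈ Set.Icc (0 : ℝ) 1) :
    Summable fun i => g i / 2 ^ i :=
  .of_nonneg_of_le (fun i => div_nonneg (hg i).1 (by positivity))
    (fun i => by rw [one_div_pow]; gcongr; exact (hg i).2) summable_geometric_two

theorem tsum_div_two_pow_le (hg : ∀ i, g i ∈ Set.Icc (0 : ℝ) 1) {ε : ℝ} (hε : 0 ≤ ε)
    {n : ℕ} (hsmall : ∀ i < n, g i ≤ ε) : ∑' i, g i / 2 ^ i ≤ 2 * ε + 2 / 2 ^ n := by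
  rw [← (summable_div_two_pow hg).sum_add_tsum_nat_add n]
  have head : ∑ i ∈ Finset.range n, g i / 2 ^ i ≤ 2 * ε :=
    calc ∑ i ∈ Finset.range n, g i / 2 ^ i
        ≤ ∑ i ∈ Finset.range n, ε * (1 / 2) ^ i := by
          refine Finset.sum_le_sum fun i hi => ?_
          rw [one_div_pow, mul_one_div]
          gcongr
          exact hsmall i (Finset.mem_range.1 hi)
      _ = ε * ∑ i ∈ Finset.range n, (1 / 2 : ℝ) ^ i := by rw [Finset.mul_sum]
      _ ≤ ε * 2 := by gcongr; exact sum_geometric_two_le n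
      _ = 2 * ε := mul_comm _ _
  have tail : ∑' i, g (i + n) / 2 ^ (i + n) ≤ 2 / 2 ^ n :=
    calc ∑' i, g (i + n) / 2 ^ (i + n)
        ≤ ∑' i, (1 / 2 : ℝ) ^ i / 2 ^ n := by
          refine Summable.tsum_le_tsum (fun i => ?_)
            ((summable_nat_add_iff n).2 (summable_div_two_pow hg))
            (summable_geometric_two.div_const _)
          rw [pow_add, ← div_div, one_div_pow]
          gcongr
          exact (hg _).2
      _ = 2 / 2 ^ n := by rw [tsum_div_const, tsum_geometric_two]
  linarith

theorem exists_lt_of_lt_tsum_div_two_pow (hg : ∀ i, g i ∈ Set.Icc (0 : ℝ) 1) {ε : ℝ}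
    (hε : 0 ≤ ε) {n : ℕ} (h : 2 * ε + 2 / 2 ^ n < ∑' i, g i / 2 ^ i) :
    ∃ i < n, ε < g i := by
  by_contra! hsmall
  exact (tsum_div_two_pow_le hg hε hsmall).not_gt h

theorem tsum_div_two_pow_le_tsum_ite_add {c α : ℕ → ℝ}
    (hc : ∀ i, c i ∈ Set.Icc (0 : ℝ) 1) (hα : ∀ i, α i ∈ Set.Icc (0 : ℝ) 1)
    {t : ℝ} (ht : 0 < t) :
    ∑' i, c i / 2 ^ i ≤
      ∑' i, (if α i < t then c i else 0) / 2 ^ i + (∑' i, α i * c i / 2 ^ i) / t := by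
  have hite : ∀ i, (if α i < t then c i else 0) ∈ Set.Icc (0 : ℝ) 1 :=
    fun i => ite_mem_Icc_zero_one (hc i)
  have hαc : ∀ i, α i * c i ∈ Set.Icc (0 : ℝ) 1 :=
    fun i => unitInterval.mul_mem (hα i) (hc i)
  rw [← tsum_div_const, ← (summable_div_two_pow hite).tsum_add
    ((summable_div_two_pow hαc).div_const t)]
  refine Summable.tsum_le_tsum (fun i => ?_) (summable_div_two_pow hc)
    ((summable_div_two_pow hite).add ((summable_div_two_pow hαc).div_const t))
  rw [div_right_comm _ _ t, ← add_div]
  gcongr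
  split_ifs with hlt
  · have : 0 ≤ α i * c i / t := div_nonneg (mul_nonneg (hα i).1 (hc i).1) ht.le
    linarith
  · rw [zero_add, le_div_iff₀ ht, mul_comm (α i)]
    exact mul_le_mul_of_nonneg_left (not_lt.1 hlt) (hc i).1

end WeightedSum

theorem two_div_two_pow_add_two_div_two_pow_le (b : ℕ) :
    2 * (1 / 2 ^ (2 * (b + 5))) + 2 / 2 ^ (2 ^ (b + 4) + 1) ≤ (1 / 2 ^ (b + 3) : ℝ) := by
  have h₁ : (1 / 2 ^ (2 * b + 9) : ℝ) ≤ 1 / 2 ^ (b + 4) :=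
    one_div_pow_le_one_div_pow_of_le one_le_two (by omega)
  have h₂ : (1 / 2 ^ 2 ^ (b + 4) : ℝ) ≤ 1 / 2 ^ (b + 4) :=
    one_div_pow_le_one_div_pow_of_le one_le_two Nat.lt_two_pow_self.le
  have e₁ : 2 * (1 / 2 ^ (2 * (b + 5))) = (1 / 2 ^ (2 * b + 9) : ℝ) := by
    rw [show 2 * (b + 5) = 2 * b + 9 + 1 by ring, pow_succ]; field_simp
  have e₂ : 2 / 2 ^ (2 ^ (b + 4) + 1) = (1 / 2 ^ 2 ^ (b + 4) : ℝ) := by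
    rw [pow_succ]; field_simp
  have e₃ : (1 / 2 ^ (b + 3) : ℝ) = 2 * (1 / 2 ^ (b + 4)) := by
    rw [pow_succ 2 (b + 3)]; field_simp
  linarith

/-- If `∑ cᵢ/2ⁱ = 1/(β·2ᵇ)` and `∑ αᵢcᵢ/2ⁱ = 1/(β·2^{b+1})` with `c, α` valued in `[0,1]`,
then there are indices `s₁, s₂ ≤ 2^{b+4}` with `c_{s₁}, c_{s₂}, α_{s₁} > 1/2^{2(b+5)}`
and `α_{s₂} < 3/4`. -/
theorem exists_s_indices (b : ℕ) (β : ℝ) (hβ : β ∈ Set.Ico (1 : ℝ) 2)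
    (c α : ℕ → ℝ)
    (hc : ∀ i, c i ∈ Set.Icc (0 : ℝ) 1) (hα : ∀ i, α i ∈ Set.Icc (0 : ℝ) 1)
    (hcsum : (∑' i : ℕ, c i / 2 ^ i) = 1 / (β * 2 ^ b))
    (hαsum : (∑' i : ℕ, α i * c i / 2 ^ i) = 1 / (β * 2 ^ (b + 1))) :
    ∃ s₁ s₂ : ℕ, s₁ ≤ 2 ^ (b + 4) ∧ s₂ ≤ 2 ^ (b + 4) ∧
      1 / 2 ^ (2 * (b + 5)) < c s₁ ∧ 1 / 2 ^ (2 * (b + 5)) < c s₂ ∧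
      1 / 2 ^ (2 * (b + 5)) < α s₁ ∧ α s₂ < 3 / 4 := by
  set ε : ℝ := 1 / 2 ^ (2 * (b + 5))
  have hε : 0 < ε := by positivity
  have hS : 1 / 2 ^ (b + 1) < ∑' i, c i / 2 ^ i := by
    have h2b : (0 : ℝ) < 2 ^ b := by positivity
    rw [hcsum, pow_succ, mul_comm _ (2 : ℝ)]
    exact one_div_lt_one_div_of_lt (by nlinarith [hβ.1]) (by nlinarith [hβ.2])
  have hT : ∑' i, α i * c i / 2 ^ i = (∑' i, c i / 2 ^ i) / 2 := by
    rw [hαsum, hcsum, pow_succ]; field_simp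
  have hsmall : 2 * ε + 2 / 2 ^ (2 ^ (b + 4) + 1) ≤ 1 / 2 ^ (b + 3) :=
    two_div_two_pow_add_two_div_two_pow_le b
  have hpow : (1 / 2 ^ (b + 1) : ℝ) = 4 * (1 / 2 ^ (b + 3)) := by
    rw [show b + 3 = b + 1 + 2 by ring, pow_add]; ring
  have hpos : (0 : ℝ) < 1 / 2 ^ (b + 3) := by positivity
  obtain ⟨s₁, hs₁N, hs₁⟩ := exists_lt_of_lt_tsum_div_two_pow
    (fun i => unitInterval.mul_mem (hα i) (hc i)) hε.le (n := 2 ^ (b + 4) + 1) (by linarith)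
  obtain ⟨s₂, hs₂N, hs₂⟩ := exists_lt_of_lt_tsum_div_two_pow
    (fun i => ite_mem_Icc_zero_one (p := α i < 3 / 4) (hc i)) hε.le (n := 2 ^ (b + 4) + 1)
    (by linarith [tsum_div_two_pow_le_tsum_ite_add hc hα (t := 3 / 4) (by norm_num)])
  split_ifs at hs₂ with hs₂α
  · exact ⟨s₁, s₂, Nat.lt_succ_iff.1 hs₁N, Nat.lt_succ_iff.1 hs₂N,
      hs₁.trans_le (mul_le_of_le_one_left (hc s₁).1 (hα s₁).2), hs₂,
      hs₁.trans_le (mul_le_of_le_one_right (hα s₁).1 (hc s₁).2), hs₂α⟩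
  · exact absurd hs₂ hε.not_gt
end

section
/- Let β ∈ [1,2), let k ∈ ℕ with n := β·2^k ∈ ℕ, and let (c,b) ∈ C(β) be k-feasible with c_0 > 0 and b ≤ k−1. Then there exists a k-feasible sequence α ∈ A^{≤k}(c,b). -/
/-- `(c,b)` is `k`-feasible: `cᵢ · β · 2ᵏ ∈ ℕ` for every `i`. -/
def kFeasC (β : ℝ) (k : ℕ) (c : ℕ → ℝ) : Prop :=
  ∀ i, ∃ m : ℕ, c i * (β * 2 ^ k) = m

/-- `α` is `k`-feasible (for `c`): `αᵢ · cᵢ · β · 2ᵏ ∈ ℕ` for every `i`, and if there is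
a largest index `t` with `c t > 0` then `α t < 1`. -/
def kFeasA (β : ℝ) (k : ℕ) (c α : ℕ → ℝ) : Prop :=
  (∀ i, ∃ m : ℕ, α i * c i * (β * 2 ^ k) = m) ∧
  (∀ t, 0 < c t → (∀ i, t < i → c i = 0) → α t < 1)

/-!
With `n = β·2^k` and `mᵢ = cᵢ·n ∈ ℕ`, a `k`-feasible `α` is `αᵢ = aᵢ/mᵢ` for integers
`0 ≤ aᵢ ≤ mᵢ`, and the constraint defining `A(c,b)` becomes `∑_{i ≤ k} aᵢ/2ⁱ = N := 2^{k-b-1}`,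
while `∑ᵢ mᵢ/2ⁱ = 2N`. Choose the `aᵢ` greedily, taking at each step as much of `mᵢ` as the
remaining budget allows. The budget is used up by step `k`, because the tail
`∑_{i > k} mᵢ/2ⁱ ≤ n/2^{k+1} = β/2 < 1 ≤ N`; and the last nonzero `mₜ` is never taken in full,
since then the greedy would have taken all of `∑_{i ≤ t} mᵢ/2ⁱ = 2N > N`.
-/

open Finset

/- `greedyRem m N j` is `2 ^ j` times the part of `N` not yet covered after the greedy steps
`i < j`; in `ℕ`, `greedyRem m N j - m j` is `greedyRem m N j - min (m j) (greedyRem m N j)`. -/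
def greedyRem (m : ℕ → ℕ) (N : ℕ) : ℕ → ℕ
  | 0 => N
  | j + 1 => 2 * (greedyRem m N j - m j)

def greedyTake (m : ℕ → ℕ) (N j : ℕ) : ℕ :=
  min (m j) (greedyRem m N j)

section Greedy

variable (m : ℕ → ℕ) (N : ℕ)

lemma greedyTake_le (j : ℕ) : greedyTake m N j ≤ m j :=
  min_le_left _ _

lemma greedyTake_le_greedyRem (j : ℕ) : greedyTake m N j ≤ greedyRem m N j :=
  min_le_right _ _

lemma greedyRem_succ (j : ℕ) :
    greedyRem m N (j + 1) = 2 * (greedyRem m N j - greedyTake m N j) := by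
  simp only [greedyRem, greedyTake]
  omega

lemma sum_greedyTake_add_greedyRem (j : ℕ) :
    ∑ i ∈ range j, (greedyTake m N i : ℝ) / 2 ^ i + greedyRem m N j / 2 ^ j = N := by
  induction j with
  | zero => simp [greedyRem]
  | succ j ih =>
    rw [sum_range_succ, greedyRem_succ, Nat.cast_mul,
      Nat.cast_sub (greedyTake_le_greedyRem m N j), ← ih]
    field_simp
    ring

lemma lt_greedyRem_of_lt {i j : ℕ} (hj : 0 < greedyRem m N j) (hi : i < j) :
    m i < greedyRem m N i := by
  induction j with
  | zero => omega
  | succ j ih =>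
    have hmj : m j < greedyRem m N j := by
      simp only [greedyRem] at hj
      omega
    rcases Nat.lt_succ_iff_lt_or_eq.mp hi with hi | rfl
    · exact ih (by omega) hi
    · exact hmj

lemma greedyTake_eq_of_lt {i j : ℕ} (hj : 0 < greedyRem m N j) (hi : i < j) :
    greedyTake m N i = m i :=
  min_eq_left (lt_greedyRem_of_lt m N hj hi).le

lemma greedyRem_eq_zero {K : ℕ} (hK : (N : ℝ) ≤ ∑ i ∈ range K, (m i : ℝ) / 2 ^ i) :
    greedyRem m N K = 0 := by
  by_contra h
  have htake : ∑ i ∈ range K, (greedyTake m N i : ℝ) / 2 ^ i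
      = ∑ i ∈ range K, (m i : ℝ) / 2 ^ i :=
    sum_congr rfl fun i hi => by
      rw [greedyTake_eq_of_lt m N (Nat.pos_of_ne_zero h) (mem_range.mp hi)]
  have hrem : (0 : ℝ) < greedyRem m N K / 2 ^ K := by
    have := Nat.pos_of_ne_zero h
    positivity
  linarith [sum_greedyTake_add_greedyRem m N K]

lemma sum_greedyTake_eq {K : ℕ} (hK : (N : ℝ) ≤ ∑ i ∈ range K, (m i : ℝ) / 2 ^ i) :
    ∑ i ∈ range K, (greedyTake m N i : ℝ) / 2 ^ i = N := by
  simpa [greedyRem_eq_zero m N hK] using sum_greedyTake_add_greedyRem m N K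

lemma greedyTake_eq_zero_of_le_sum {K i : ℕ}
    (hK : (N : ℝ) ≤ ∑ i ∈ range K, (m i : ℝ) / 2 ^ i) (hi : K ≤ i) : greedyTake m N i = 0 := by
  suffices greedyRem m N i = 0 by simp [greedyTake, this]
  induction i, hi using Nat.le_induction with
  | base => exact greedyRem_eq_zero m N hK
  | succ i _ ih => simp [greedyRem, ih]

lemma greedyTake_lt {t : ℕ} (ht : 0 < m t)
    (hN : (N : ℝ) < ∑ i ∈ range (t + 1), (m i : ℝ) / 2 ^ i) :
    greedyTake m N t < m t := by
  by_contra h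
  have htake : greedyTake m N t = m t := le_antisymm (greedyTake_le m N t) (not_lt.mp h)
  have hpos : 0 < greedyRem m N t := by
    have := greedyTake_le_greedyRem m N t
    omega
  have hsum : ∑ i ∈ range (t + 1), (greedyTake m N i : ℝ) / 2 ^ i
      = ∑ i ∈ range (t + 1), (m i : ℝ) / 2 ^ i := by
    rw [sum_range_succ, sum_range_succ, htake]
    congr 1
    exact sum_congr rfl fun i hi => by rw [greedyTake_eq_of_lt m N hpos (mem_range.mp hi)]
  have hrem : (0 : ℝ) ≤ greedyRem m N (t + 1) / 2 ^ (t + 1) := by positivity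
  linarith [sum_greedyTake_add_greedyRem m N (t + 1)]

end Greedy

lemma tsum_div_two_pow_le_s9 {c : ℕ → ℝ} (hc : ∀ i, 0 ≤ c i)
    (hsum : ∀ M, ∑ i ∈ range M, c i ≤ 1) (K : ℕ) :
    ∑' i, c i / 2 ^ i ≤ ∑ i ∈ range K, c i / 2 ^ i + 1 / 2 ^ K := by
  have hf : ∀ i, 0 ≤ c i / 2 ^ i := fun i => div_nonneg (hc i) (by positivity)
  refine Real.tsum_le_of_sum_range_le hf fun M => ?_
  set L := max M K
  calc ∑ i ∈ range M, c i / 2 ^ i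
      ≤ ∑ i ∈ range L, c i / 2 ^ i :=
        sum_le_sum_of_subset_of_nonneg (range_subset_range.mpr (le_max_left M K))
          fun i _ _ => hf i
    _ = ∑ i ∈ range K, c i / 2 ^ i + ∑ i ∈ Ico K L, c i / 2 ^ i :=
        (sum_range_add_sum_Ico _ (le_max_right M K)).symm
    _ ≤ ∑ i ∈ range K, c i / 2 ^ i + ∑ i ∈ Ico K L, c i / 2 ^ K := by
        gcongr with i hi
        · exact hc i
        · norm_num
        · exact (mem_Ico.mp hi).1
    _ ≤ ∑ i ∈ range K, c i / 2 ^ i + 1 / 2 ^ K := by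
        rw [← sum_div]
        gcongr
        calc ∑ i ∈ Ico K L, c i ≤ ∑ i ∈ range L, c i :=
              sum_le_sum_of_subset_of_nonneg (fun i hi => mem_range.mpr (mem_Ico.mp hi).2)
                fun i _ _ => hc i
          _ ≤ 1 := hsum L

section Scaling

variable {β : ℝ} {c : ℕ → ℝ} {b : ℕ}

lemma mul_tsum_div_two_pow_eq (hβ : β ≠ 0) (hC : memC β c b) (d : ℕ) :
    β * 2 ^ (b + 1 + d) * ∑' i, c i / 2 ^ i = 2 * 2 ^ d := by
  rw [hC.2.1]
  field_simp
  ring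

lemma two_pow_le_mul_sum_range (hβ : β ∈ Set.Ioo 0 2) (hC : memC β c b) (d : ℕ) :
    (2 : ℝ) ^ d ≤ β * 2 ^ (b + 1 + d) * ∑ i ∈ range (b + 1 + d + 1), c i / 2 ^ i := by
  obtain ⟨hβ0, hβ2⟩ := hβ
  have h := mul_le_mul_of_nonneg_left
    (tsum_div_two_pow_le_s9 (fun i => (hC.1 i).1) hC.2.2 (b + 1 + d + 1))
    (by positivity : 0 ≤ β * 2 ^ (b + 1 + d))
  have htail : β * 2 ^ (b + 1 + d) * (1 / 2 ^ (b + 1 + d + 1)) = β / 2 := by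
    field_simp
    ring
  rw [mul_tsum_div_two_pow_eq hβ0.ne' hC, mul_add, htail] at h
  have : (1 : ℝ) ≤ 2 ^ d := one_le_pow₀ (by norm_num)
  linarith

end Scaling

section Ratio

variable {β : ℝ} {n : ℕ} {c : ℕ → ℝ} {m a : ℕ → ℕ}

lemma sum_div_two_pow_eq_mul (hm : ∀ i, c i * n = m i) (K : ℕ) :
    ∑ i ∈ range K, (m i : ℝ) / 2 ^ i = n * ∑ i ∈ range K, c i / 2 ^ i := by
  rw [mul_sum]
  exact sum_congr rfl fun i _ => by rw [← hm]; ring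

lemma div_mul_mul_eq (hm : ∀ i, c i * n = m i) (ha : ∀ i, a i ≤ m i) (i : ℕ) :
    (a i : ℝ) / m i * c i * n = a i := by
  rw [mul_assoc, hm, div_mul_cancel_of_imp]
  intro h
  have : a i ≤ m i := ha i
  have : m i = 0 := by exact_mod_cast h
  simp only [Nat.cast_eq_zero]
  omega

lemma memA_of_sum_eq {b : ℕ} {N : ℝ} (hn0 : (n : ℝ) ≠ 0) (hn : (n : ℝ) = β * 2 ^ (b + 1) * N)
    (hm : ∀ i, c i * n = m i) (ha : ∀ i, a i ≤ m i) {K : ℕ} (hK : ∀ i, K ≤ i → a i = 0)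
    (hsum : ∑ i ∈ range K, (a i : ℝ) / 2 ^ i = N) :
    memA β b c fun i => (a i : ℝ) / m i := by
  refine ⟨fun i => ⟨by positivity, div_le_one_of_le₀ (by exact_mod_cast ha i) (by positivity)⟩, ?_⟩
  have hterm : ∀ i, (a i : ℝ) / m i * c i / 2 ^ i = (a i : ℝ) / 2 ^ i / n := fun i => by
    rw [eq_div_iff hn0, div_mul_eq_mul_div, div_mul_mul_eq hm ha i]
  simp_rw [hterm]
  rw [tsum_eq_sum (s := range K) fun i hi => by simp [hK i (by simpa using hi)], ← sum_div, hsum]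
  rw [hn] at hn0 ⊢
  have hN : N ≠ 0 := right_ne_zero_of_mul hn0
  have hβ : β ≠ 0 := left_ne_zero_of_mul (left_ne_zero_of_mul hn0)
  field_simp

lemma kFeasA_of_lt {k : ℕ} (hn : (n : ℝ) = β * 2 ^ k) (hm : ∀ i, c i * n = m i)
    (ha : ∀ i, a i ≤ m i) (hlast : ∀ t, 0 < c t → (∀ i, t < i → c i = 0) → a t < m t) :
    kFeasA β k c fun i => (a i : ℝ) / m i := by
  refine ⟨fun i => ⟨a i, by rw [← hn, div_mul_mul_eq hm ha]⟩, fun t hct hct' => ?_⟩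
  have := hlast t hct hct'
  rw [div_lt_one (by exact_mod_cast this.trans_le' (Nat.zero_le _))]
  exact_mod_cast this

end Ratio

theorem exists_kfeasible_alpha_general (β : ℝ) (hβ : β ∈ Set.Ico (1 : ℝ) 2)
    (k n : ℕ) (hn : (n : ℝ) = β * 2 ^ k)
    (c : ℕ → ℝ) (b : ℕ) (hC : memC β c b) (hfeas : kFeasC β k c)
    (hb : (b : ℤ) ≤ (k : ℤ) - 1) :
    ∃ α : ℕ → ℝ, memA β b c α ∧ (∀ i, k < i → α i = 0) ∧ kFeasA β k c α := by
  have hβ0 : 0 < β := by linarith [hβ.1]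
  choose m hm using hfeas
  simp_rw [← hn] at hm
  obtain ⟨d, rfl⟩ : ∃ d, k = b + 1 + d := ⟨k - (b + 1), by omega⟩
  have hnpos : (0 : ℝ) < n := hn ▸ by positivity
  have hhead : ((2 ^ d : ℕ) : ℝ) ≤ ∑ i ∈ range (b + 1 + d + 1), (m i : ℝ) / 2 ^ i := by
    rw [sum_div_two_pow_eq_mul hm, hn, Nat.cast_pow, Nat.cast_ofNat]
    exact two_pow_le_mul_sum_range ⟨hβ0, hβ.2⟩ hC d
  refine ⟨_, memA_of_sum_eq hnpos.ne' (by rw [hn, pow_add]; push_cast; ring) hm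
      (greedyTake_le m _) (fun i => greedyTake_eq_zero_of_le_sum m _ hhead)
      (sum_greedyTake_eq m _ hhead),
    fun i hi => by simp [greedyTake_eq_zero_of_le_sum m _ hhead hi],
    kFeasA_of_lt hn hm (greedyTake_le m _) fun t hct hlast => greedyTake_lt m _ ?_ ?_⟩
  · exact_mod_cast hm t ▸ mul_pos hct hnpos
  · have hfin : ∑' i, c i / 2 ^ i = ∑ i ∈ range (t + 1), c i / 2 ^ i :=
      tsum_eq_sum fun i hi => by simp [hlast i (by simpa using hi)]
    rw [sum_div_two_pow_eq_mul hm, ← hfin, hn, mul_tsum_div_two_pow_eq hβ0.ne' hC]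
    push_cast
    linarith [(pow_pos two_pos d : (0 : ℝ) < 2 ^ d)]

/-- If `(c,b) ∈ C(β)` is `k`-feasible with `c₀ > 0` and `b ≤ k−1` (for `n = β·2^k ∈ ℕ`),
then there exists a `k`-feasible `α ∈ A^{≤k}(c,b)`. -/
theorem exists_kfeasible_alpha (β : ℝ) (hβ : β ∈ Set.Ico (1 : ℝ) 2)
    (k n : ℕ) (hn : (n : ℝ) = β * 2 ^ k)
    (c : ℕ → ℝ) (b : ℕ) (hC : memC β c b) (hfeas : kFeasC β k c)
    (hc0 : 0 < c 0) (hb : (b : ℤ) ≤ (k : ℤ) - 1) :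
    ∃ α : ℕ → ℝ, memA β b c α ∧ (∀ i, k < i → α i = 0) ∧ kFeasA β k c α :=
  exists_kfeasible_alpha_general β hβ k n hn c b hC hfeas hb
end

section
/- Let β ∈ [1,2), (c,b) ∈ C(β), ε > 0, and α ∈ A(c,b). Then there exist K ∈ ℕ and a K-feasible sequence α̃ ∈ A^{≤K}(c,b) such that |P(c,α) − P(c,α̃)| ≤ ε. -/
/-!
Choose `j` with `c j > 0` and `α j ≤ 1/2` (it exists because `∑ αᵢ cᵢ / 2ⁱ` is half of
`∑ cᵢ / 2ⁱ`), and `L ≥ j` with `c L > 0` such that `c` has little mass beyond `L`. Cutting `α`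
off after `L`, scaling it by `1 - η` and giving the lost weight to coordinate `j` yields a finitely
supported `α' ∈ A(c,b)` with values in `[0,1)`. Then round `α'ᵢ` down to the lattice
`ℕ / (cᵢ β 2ᴷ)` for `i < L` and give the rounding loss to coordinate `L`. That coordinate lands on
its lattice automatically: the weighted sum is the dyadic number `1/(β 2^(b+1))` and `L` carries
the smallest weight `2^(-L)`. For large `K` every coordinate with `cᵢ > 0` moves little, and
`P(c,·)` is uniformly continuous under perturbations that are small on those coordinates up to `L`
once `c` has small mass beyond `L`.
-/
open Finset Filter

lemma binH_eq_binEntropy_div_log_two (p : ℝ) : binH p = Real.binEntropy p / Real.log 2 := by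
  unfold binH Real.binEntropy
  rw [Real.logb, Real.logb, one_div, one_div]
  ring

lemma continuous_binH : Continuous binH := by
  rw [funext binH_eq_binEntropy_div_log_two]
  exact Real.binEntropy_continuous.div_const _

lemma binH_mem_Icc {p : ℝ} (hp : p ∈ Set.Icc 0 1) : binH p ∈ Set.Icc 0 1 := by
  rw [binH_eq_binEntropy_div_log_two]
  exact ⟨div_nonneg (Real.binEntropy_nonneg hp.1 hp.2) (Real.log_nonneg one_le_two),
    (div_le_one (Real.log_pos one_lt_two)).2 Real.binEntropy_le_log_two⟩

section WeightedSums

variable {c f g : ℕ → ℝ}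

lemma summable_mul_of_mem_Icc (hc : ∀ i, 0 ≤ c i) (hcs : Summable c) (hf : ∀ i, f i ∈ Set.Icc 0 1) :
    Summable fun i => f i * c i :=
  hcs.of_nonneg_of_le (fun i => mul_nonneg (hf i).1 (hc i)) fun i =>
    mul_le_of_le_one_left (hc i) (hf i).2

lemma tsum_mul_mem_Icc (hc : ∀ i, 0 ≤ c i) (hc1 : ∀ n, ∑ i ∈ range n, c i ≤ 1)
    (hf : ∀ i, f i ∈ Set.Icc 0 1) : ∑' i, f i * c i ∈ Set.Icc 0 1 := by
  have hcs := summable_of_sum_range_le hc hc1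
  refine ⟨tsum_nonneg fun i => mul_nonneg (hf i).1 (hc i), ?_⟩
  calc ∑' i, f i * c i ≤ ∑' i, c i :=
        (summable_mul_of_mem_Icc hc hcs hf).tsum_le_tsum
          (fun i => mul_le_of_le_one_left (hc i) (hf i).2) hcs
    _ ≤ 1 := Real.tsum_le_of_sum_range_le hc hc1

lemma tsum_nat_add_le_of_le (n : ℕ) (hf : ∀ i, 0 ≤ f i) (hfg : ∀ i, f i ≤ g i)
    (hg : Summable g) : ∑' k, f (k + n) ≤ ∑' k, g (k + n) :=
  Summable.tsum_le_tsum (fun _ => hfg _)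
    ((summable_nat_add_iff n).2 (hg.of_nonneg_of_le hf hfg)) ((summable_nat_add_iff n).2 hg)

lemma abs_tsum_mul_sub_le {a : ℝ} {L : ℕ} (hc : ∀ i, 0 ≤ c i)
    (hc1 : ∀ n, ∑ i ∈ range n, c i ≤ 1) (hf : ∀ i, f i ∈ Set.Icc 0 1) (hg : ∀ i, g i ∈ Set.Icc 0 1)
    (ha : 0 ≤ a) (hfg : ∀ i ≤ L, 0 < c i → |f i - g i| ≤ a) :
    |∑' i, f i * c i - ∑' i, g i * c i| ≤ a + ∑' k, c (k + (L + 1)) := by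
  have hcs := summable_of_sum_range_le hc hc1
  have hfg1 : ∀ i, |f i - g i| ≤ 1 := fun i =>
    abs_sub_le_iff.2 ⟨by linarith [(hf i).2, (hg i).1], by linarith [(hf i).1, (hg i).2]⟩
  have hnorm : (fun i => ‖(f i - g i) * c i‖) = fun i => |f i - g i| * c i :=
    funext fun i => by rw [Real.norm_eq_abs, abs_mul, abs_of_nonneg (hc i)]
  have hs : Summable fun i => |f i - g i| * c i :=
    hcs.of_nonneg_of_le (fun i => mul_nonneg (abs_nonneg _) (hc i)) fun i =>
      mul_le_of_le_one_left (hc i) (hfg1 i)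
  have hwindow : ∀ i ∈ range (L + 1), |f i - g i| * c i ≤ a * c i := by
    intro i hi
    rcases (hc i).eq_or_lt with h | h
    · simp [← h]
    · exact mul_le_mul_of_nonneg_right (hfg i (Nat.lt_succ_iff.1 (mem_range.1 hi)) h) (hc i)
  calc |∑' i, f i * c i - ∑' i, g i * c i| = ‖∑' i, (f i - g i) * c i‖ := by
        rw [← (summable_mul_of_mem_Icc hc hcs hf).tsum_sub (summable_mul_of_mem_Icc hc hcs hg),
          Real.norm_eq_abs]
        simp_rw [sub_mul]
    _ ≤ ∑' i, |f i - g i| * c i := by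
        rw [← hnorm]
        exact norm_tsum_le_tsum_norm (hnorm ▸ hs)
    _ = ∑ i ∈ range (L + 1), |f i - g i| * c i +
          ∑' k, |f (k + (L + 1)) - g (k + (L + 1))| * c (k + (L + 1)) :=
        (hs.sum_add_tsum_nat_add _).symm
    _ ≤ a * ∑ i ∈ range (L + 1), c i + ∑' k, c (k + (L + 1)) := by
        rw [mul_sum]
        exact add_le_add (sum_le_sum hwindow) (tsum_nat_add_le_of_le _
          (fun i => mul_nonneg (abs_nonneg _) (hc i))
          (fun i => mul_le_of_le_one_left (hc i) (hfg1 i)) hcs)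
    _ ≤ a + ∑' k, c (k + (L + 1)) := by
        gcongr
        exact mul_le_of_le_one_right ha (hc1 _)

end WeightedSums

lemma exists_abs_Pfun_sub_le {ε : ℝ} (hε : 0 < ε) :
    ∃ δ > 0, ∀ {c α α' : ℕ → ℝ} {L : ℕ}, (∀ i, 0 ≤ c i) → (∀ n, ∑ i ∈ range n, c i ≤ 1) →
      (∀ i, α i ∈ Set.Icc 0 1) → (∀ i, α' i ∈ Set.Icc 0 1) → (∀ i ≤ L, 0 < c i → |α i - α' i| ≤ δ) →
      ∑' k, c (k + (L + 1)) ≤ δ → |Pfun c α - Pfun c α'| ≤ ε := by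
  obtain ⟨δ₀, hδ₀, hbinH⟩ := Metric.uniformContinuousOn_iff.1
    (isCompact_Icc.uniformContinuousOn_of_continuous continuous_binH.continuousOn) (ε / 3)
    (by positivity)
  have hclose : ∀ {p q : ℝ}, p ∈ Set.Icc 0 1 → q ∈ Set.Icc 0 1 → |p - q| < δ₀ →
      |binH p - binH q| ≤ ε / 3 := fun hp hq h =>
    (hbinH _ hp _ hq (by rwa [Real.dist_eq])).le
  refine ⟨min (δ₀ / 3) (ε / 3), by positivity, fun {c α α' L} hc hc1 hα hα' hαα' htail => ?_⟩
  have hδ₀' : min (δ₀ / 3) (ε / 3) ≤ δ₀ / 3 := min_le_left _ _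
  have hε' : min (δ₀ / 3) (ε / 3) ≤ ε / 3 := min_le_right _ _
  have hentropy := abs_tsum_mul_sub_le hc hc1 (fun i => binH_mem_Icc (hα i))
    (fun i => binH_mem_Icc (hα' i)) (by positivity : 0 ≤ ε / 3) fun i hi hci =>
      hclose (hα i) (hα' i) ((hαα' i hi hci).trans_lt (by linarith))
  have hmean := abs_tsum_mul_sub_le hc hc1 hα hα' (by positivity) hαα'
  have hmeanH := hclose (tsum_mul_mem_Icc hc hc1 hα) (tsum_mul_mem_Icc hc hc1 hα')
    (by linarith)
  calc |Pfun c α - Pfun c α'|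
      = |(∑' i, binH (α i) * c i - ∑' i, binH (α' i) * c i) -
          (binH (∑' i, α i * c i) - binH (∑' i, α' i * c i))| := by
        unfold Pfun; ring_nf
    _ ≤ |∑' i, binH (α i) * c i - ∑' i, binH (α' i) * c i| +
          |binH (∑' i, α i * c i) - binH (∑' i, α' i * c i)| := abs_sub _ _
    _ ≤ ε := by linarith

lemma exists_pos_le_of_tsum_mul_le {w α : ℕ → ℝ} {a : ℝ} (hw : ∀ i, 0 ≤ w i) (hws : Summable w)
    (hαw : Summable fun i => α i * w i) (hpos : 0 < ∑' i, w i)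
    (h : ∑' i, α i * w i ≤ a * ∑' i, w i) : ∃ j, 0 < w j ∧ α j ≤ a := by
  by_contra! hα
  obtain ⟨i, hi⟩ : ∃ i, 0 < w i := by
    by_contra! h0
    simp [funext fun i => le_antisymm (h0 i) (hw i)] at hpos
  have hle : ∀ k, a * w k ≤ α k * w k := fun k => by
    rcases (hw k).eq_or_lt with h | h
    · simp [← h]
    · exact (mul_lt_mul_of_pos_right (hα k h) h).le
  have hlt := Summable.tsum_lt_tsum hle (mul_lt_mul_of_pos_right (hα i hi) hi) (hws.mul_left a) hαw
  rw [tsum_mul_left] at hlt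
  linarith

lemma exists_pos_le_half {β : ℝ} (hβ : 0 < β) {b : ℕ} {c α : ℕ → ℝ} (hC : memC β c b)
    (hα : memA β b c α) : ∃ j, 0 < c j ∧ α j ≤ 1 / 2 := by
  obtain ⟨hc, hcw, hc1⟩ := hC
  obtain ⟨hα, hαS⟩ := hα
  have hw : ∀ i, 0 ≤ c i / 2 ^ i := fun i => div_nonneg (hc i).1 (by positivity)
  have hws : Summable fun i => c i / 2 ^ i :=
    (summable_of_sum_range_le (fun i => (hc i).1) hc1).of_nonneg_of_le hw fun i =>
      div_le_self (hc i).1 (one_le_pow₀ one_le_two)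
  obtain ⟨j, hj, hαj⟩ := exists_pos_le_of_tsum_mul_le (a := 1 / 2) hw hws
    (hws.of_nonneg_of_le (fun i => mul_nonneg (hα i).1 (hw i)) fun i =>
      mul_le_of_le_one_left (hw i) (hα i).2)
    (by rw [hcw]; positivity)
    (le_of_eq (by simp_rw [← mul_div_assoc, hαS, hcw]; rw [pow_succ]; field_simp))
  exact ⟨j, (div_pos_iff_of_pos_right (by positivity)).1 hj, hαj⟩

lemma exists_pos_tail_le {c : ℕ → ℝ} (hc : ∀ i, 0 ≤ c i) {j : ℕ} (hj : 0 < c j) {τ : ℝ}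
    (hτ : 0 < τ) : ∃ L, j ≤ L ∧ 0 < c L ∧ ∑' k, c (k + (L + 1)) ≤ τ := by
  obtain ⟨N, hN⟩ := eventually_atTop.1 ((tendsto_sum_nat_add c).eventually (ge_mem_nhds hτ))
  by_cases h : ∃ i, max N j ≤ i ∧ 0 < c i
  · obtain ⟨i, hi, hci⟩ := h
    exact ⟨i, le_of_max_le_right hi, hci, hN _ (by omega)⟩
  push Not at h
  classical
  let P : ℕ → Prop := fun i => 0 < c i
  set L := Nat.findGreatest P (max N j)
  have hzero : ∀ k, c (k + (L + 1)) = 0 := by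
    intro k
    refine le_antisymm ?_ (hc _)
    by_cases hk : k + (L + 1) ≤ max N j
    · exact not_lt.1 (Nat.findGreatest_is_greatest (P := P) (by omega) hk)
    · exact h _ (by omega)
  refine ⟨L, Nat.le_findGreatest (P := P) (le_max_right _ _) hj,
    Nat.findGreatest_spec (P := P) (le_max_right _ _) hj, ?_⟩
  simp only [hzero, tsum_zero, hτ.le]

noncomputable def rebalance (c : ℕ → ℝ) (n j : ℕ) (S : ℝ) (a : ℕ → ℝ) : ℕ → ℝ :=
  a + Pi.single j ((S - ∑ i ∈ range n, a i * c i / 2 ^ i) * 2 ^ j / c j)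

section Rebalance

variable {c a : ℕ → ℝ} {n i j : ℕ} {S : ℝ}

lemma rebalance_apply_of_ne (h : i ≠ j) : rebalance c n j S a i = a i := by
  simp [rebalance, h]

lemma rebalance_apply_self :
    rebalance c n j S a j = a j + (S - ∑ i ∈ range n, a i * c i / 2 ^ i) * 2 ^ j / c j := by
  simp [rebalance]

lemma sum_rebalance (hj : j < n) (hcj : c j ≠ 0) :
    ∑ i ∈ range n, rebalance c n j S a i * c i / 2 ^ i = S := by
  set x := (S - ∑ i ∈ range n, a i * c i / 2 ^ i) * 2 ^ j / c j
  have hsingle : ∑ i ∈ range n, (Pi.single j x : ℕ → ℝ) i * c i / 2 ^ i = x * c j / 2 ^ j := by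
    rw [sum_eq_single_of_mem j (mem_range.2 hj) fun i _ hij => by simp [Pi.single_eq_of_ne hij]]
    simp
  simp only [rebalance, Pi.add_apply, add_mul, add_div, sum_add_distrib, hsingle, x]
  field_simp
  ring

end Rebalance

lemma mul_div_four_mul_two_pow_le {δ x : ℝ} (hδ : 0 ≤ δ) (hx : x ≤ 1) (j : ℕ) :
    δ * x / (4 * 2 ^ j) ≤ δ / 4 := by
  rw [div_le_div_iff₀ (by positivity) (by norm_num)]
  nlinarith [one_le_pow₀ (one_le_two : (1 : ℝ) ≤ 2) (n := j), mul_le_of_le_one_right hδ hx]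

lemma sub_sum_scaled_window_mem_Icc {S η : ℝ} {c α : ℕ → ℝ} {L : ℕ} (hc : ∀ i, 0 ≤ c i)
    (hc1 : ∀ n, ∑ i ∈ range n, c i ≤ 1) (hα : ∀ i, α i ∈ Set.Icc 0 1)
    (hαS : ∑' i, α i * c i / 2 ^ i = S) (hη : 0 ≤ η) (htail : ∑' k, c (k + (L + 1)) ≤ η) :
    S - ∑ i ∈ range (L + 1), (1 - η) * α i * c i / 2 ^ i ∈ Set.Icc 0 (2 * η) := by
  have hterm0 : ∀ i, 0 ≤ α i * c i / 2 ^ i := fun i =>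
    div_nonneg (mul_nonneg (hα i).1 (hc i)) (by positivity)
  have hterm : ∀ i, α i * c i / 2 ^ i ≤ c i := fun i =>
    (div_le_self (mul_nonneg (hα i).1 (hc i)) (one_le_pow₀ one_le_two)).trans
      (mul_le_of_le_one_left (hc i) (hα i).2)
  have hcs := summable_of_sum_range_le hc hc1
  set W := ∑ i ∈ range (L + 1), α i * c i / 2 ^ i
  set t := ∑' k, α (k + (L + 1)) * c (k + (L + 1)) / 2 ^ (k + (L + 1))
  have hWt : W + t = S := hαS ▸ (hcs.of_nonneg_of_le hterm0 hterm).sum_add_tsum_nat_add _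
  have ht0 : 0 ≤ t := tsum_nonneg fun _ => hterm0 _
  have ht : t ≤ η := (tsum_nat_add_le_of_le _ hterm0 hterm hcs).trans htail
  have hW0 : 0 ≤ W := sum_nonneg fun i _ => hterm0 i
  have hW1 : W ≤ 1 := (sum_le_sum fun i _ => hterm i).trans (hc1 _)
  have hdeficit : S - ∑ i ∈ range (L + 1), (1 - η) * α i * c i / 2 ^ i = η * W + t := by
    simp_rw [mul_assoc (1 - η), mul_div_assoc, ← mul_sum, ← mul_div_assoc]
    rw [← hWt]
    ring
  rw [hdeficit]
  constructor <;> nlinarith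

lemma exists_truncation {S δ : ℝ} {c α : ℕ → ℝ} {j L : ℕ} (hc : ∀ i, 0 ≤ c i)
    (hc1 : ∀ n, ∑ i ∈ range n, c i ≤ 1) (hα : ∀ i, α i ∈ Set.Icc 0 1)
    (hαS : ∑' i, α i * c i / 2 ^ i = S) (hcj : 0 < c j) (hαj : α j ≤ 1 / 2) (hjL : j ≤ L)
    (hδ : δ ∈ Set.Ioo 0 1) (htail : ∑' k, c (k + (L + 1)) ≤ δ * c j / (4 * 2 ^ j)) :
    ∃ α' : ℕ → ℝ, (∀ i, α' i ∈ Set.Ico 0 1) ∧ (∀ i, L < i → α' i = 0) ∧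
      ∑ i ∈ range (L + 1), α' i * c i / 2 ^ i = S ∧ ∀ i ≤ L, |α' i - α i| ≤ δ := by
  set η := δ * c j / (4 * 2 ^ j) with hη
  have hη0 : 0 < η := by have := hδ.1; positivity
  have hηδ : η ≤ δ / 4 := mul_div_four_mul_two_pow_le hδ.1.le
    ((single_le_sum (fun i _ => hc i) (self_mem_range_succ j)).trans (hc1 _)) j
  have hscale : ∀ i, 0 ≤ (1 - η) * α i ∧ (1 - η) * α i ≤ 1 - η ∧
      0 ≤ α i - (1 - η) * α i ∧ α i - (1 - η) * α i ≤ η := fun i => by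
    rw [show α i - (1 - η) * α i = η * α i by ring]
    exact ⟨mul_nonneg (by linarith [hδ.2]) (hα i).1,
      mul_le_of_le_one_right (by linarith [hδ.2]) (hα i).2,
      mul_nonneg hη0.le (hα i).1, mul_le_of_le_one_right hη0.le (hα i).2⟩
  -- Scaling by `1 - η` keeps all coordinates but `j` below `1`; coordinate `j`, where `α j ≤ 1/2`,
  -- absorbs the lost weight.
  set a : ℕ → ℝ := fun i => if i ≤ L then (1 - η) * α i else 0
  set m := S - ∑ i ∈ range (L + 1), a i * c i / 2 ^ i
  have hm : m ∈ Set.Icc 0 (2 * η) := by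
    convert sub_sum_scaled_window_mem_Icc hc hc1 hα hαS hη0.le htail using 2
    exact sum_congr rfl fun i hi => by simp [a, Nat.lt_succ_iff.1 (mem_range.1 hi)]
  have hd : m * 2 ^ j / c j ≤ δ / 2 := by
    rw [div_le_iff₀ hcj]
    calc m * 2 ^ j ≤ 2 * η * 2 ^ j := by gcongr; exact hm.2
      _ = δ / 2 * c j := by rw [hη]; field_simp; ring
  have hd0 : 0 ≤ m * 2 ^ j / c j := by have := hm.1; positivity
  have hj : rebalance c (L + 1) j S a j = (1 - η) * α j + m * 2 ^ j / c j := by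
    rw [rebalance_apply_self]
    simp [a, hjL, m]
  refine ⟨rebalance c (L + 1) j S a, fun i => ?_, fun i hi => ?_,
    sum_rebalance (Nat.lt_succ_of_le hjL) hcj.ne', fun i hi => ?_⟩
  · rcases eq_or_ne i j with rfl | hij
    · rw [hj]
      exact ⟨by linarith [(hscale i).1], by linarith [(hscale i).2.2.1, hδ.2]⟩
    · rw [rebalance_apply_of_ne hij]
      simp only [a]
      split_ifs
      · exact ⟨(hscale i).1, by linarith [(hscale i).2.1]⟩
      · exact ⟨le_rfl, one_pos⟩
  · rw [rebalance_apply_of_ne (by omega)]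
    simp [a, not_le.2 hi]
  · rw [abs_le]
    rcases eq_or_ne i j with rfl | hij
    · rw [hj]
      constructor <;> linarith [(hscale i).2.2.1, (hscale i).2.2.2]
    · rw [rebalance_apply_of_ne hij]
      simp only [a, if_pos hi]
      constructor <;> linarith [(hscale i).2.2.1, (hscale i).2.2.2]

-- Where `c i = 0` this is `0` (as `x / 0 = 0`); harmless, since such coordinates have weight `0`.
noncomputable def roundDown (u : ℝ) (L : ℕ) (c α : ℕ → ℝ) (i : ℕ) : ℝ :=
  if i < L then ⌊α i * (c i * u)⌋₊ / (c i * u) else α i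

section RoundDown

variable {u : ℝ} {L i : ℕ} {c α : ℕ → ℝ}

lemma roundDown_mem_Icc (hu : 0 ≤ u) (hc : 0 ≤ c i) (hα : 0 ≤ α i) :
    roundDown u L c α i ∈ Set.Icc 0 (α i) := by
  unfold roundDown
  split_ifs
  · have hM : 0 ≤ c i * u := mul_nonneg hc hu
    refine ⟨by positivity, ?_⟩
    rcases hM.eq_or_lt with h | h
    · simp [← h, hα]
    · rw [div_le_iff₀ h]
      exact Nat.floor_le (mul_nonneg hα hM)
  · exact ⟨hα, le_rfl⟩

lemma sub_roundDown_mul_lt_one : (α i - roundDown u L c α i) * (c i * u) < 1 := by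
  unfold roundDown
  split_ifs
  · rcases eq_or_ne (c i * u) 0 with h | h
    · simp [h]
    · rw [sub_mul, div_mul_cancel₀ _ h]
      linarith [Nat.lt_floor_add_one (α i * (c i * u))]
  · simp

lemma roundDown_mul_of_lt (h : i < L) :
    roundDown u L c α i * c i * u = ⌊α i * (c i * u)⌋₊ := by
  rw [roundDown, if_pos h, mul_assoc]
  exact div_mul_cancel_of_imp fun h0 => by simp [h0]

lemma sum_sub_roundDown_mem_Icc (hu : 0 < u) (hc : ∀ i, 0 ≤ c i) (hα : ∀ i, 0 ≤ α i) (n : ℕ) :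
    ∑ i ∈ range n, (α i - roundDown u L c α i) * c i / 2 ^ i ∈ Set.Icc 0 (2 / u) := by
  have hterm : ∀ i,
      (α i - roundDown u L c α i) * c i / 2 ^ i ∈ Set.Icc 0 (1 / u * (1 / 2) ^ i) := by
    intro i
    have hle := (roundDown_mem_Icc (L := L) hu.le (hc i) (hα i)).2
    have hloss : (α i - roundDown u L c α i) * c i ≤ 1 / u := by
      rw [le_div_iff₀ hu, mul_assoc]
      exact sub_roundDown_mul_lt_one.le
    refine ⟨div_nonneg (mul_nonneg (sub_nonneg.2 hle) (hc i)) (by positivity), ?_⟩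
    rw [one_div_pow, mul_one_div]
    gcongr
  refine ⟨sum_nonneg fun i _ => (hterm i).1, (sum_le_sum fun i _ => (hterm i).2).trans ?_⟩
  rw [← mul_sum, div_eq_mul_one_div 2, mul_comm 2]
  gcongr
  exact sum_geometric_two_le n

end RoundDown

lemma exists_natCast_eq_of_add_natCast_eq {x : ℝ} {m n : ℕ} (hx : 0 ≤ x) (h : x + n = m) :
    ∃ k : ℕ, x = k :=
  ⟨m - n, by rw [Nat.cast_sub (by exact_mod_cast (by linarith : (n : ℝ) ≤ m))]; linarith⟩

lemma exists_natCast_eq_last_of_sum_eq {β : ℝ} (hβ : 0 < β) {b K L : ℕ} (hbK : b + 1 ≤ K + L)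
    {c γ : ℕ → ℝ} (n : ℕ → ℕ) (hγ : 0 ≤ γ L * c L) (hfeas : ∀ i < L, γ i * c i * (β * 2 ^ K) = n i)
    (hsum : ∑ i ∈ range (L + 1), γ i * c i / 2 ^ i = 1 / (β * 2 ^ (b + 1))) :
    ∃ m : ℕ, γ L * c L * (β * 2 ^ K) = m := by
  -- Multiplied by `β 2^(K+L)`, the weighted sum becomes `∑_{i<L} nᵢ 2^(L-i) + γ_L c_L β 2^K`,
  -- and its value becomes `2^(K+L-b-1)`.
  have hterm : ∀ i ∈ range L,
      γ i * c i / 2 ^ i * (β * 2 ^ K * 2 ^ L) = (n i * 2 ^ (L - i) : ℕ) := by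
    intro i hi
    rw [Nat.cast_mul, ← hfeas i (mem_range.1 hi), Nat.cast_pow, Nat.cast_two,
      pow_sub₀ _ two_ne_zero (mem_range.1 hi).le]
    field_simp
  have htotal : 1 / (β * 2 ^ (b + 1)) * (β * 2 ^ K * 2 ^ L) = (2 ^ (K + L - (b + 1)) : ℕ) := by
    rw [Nat.cast_pow, Nat.cast_two, pow_sub₀ _ two_ne_zero hbK]
    field_simp
    ring
  have h := congrArg (· * (β * 2 ^ K * 2 ^ L)) hsum
  simp only [sum_range_succ, add_mul, sum_mul] at h
  rw [sum_congr rfl hterm, htotal, ← Nat.cast_sum] at h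
  refine exists_natCast_eq_of_add_natCast_eq (n := ∑ i ∈ range L, n i * 2 ^ (L - i)) (by positivity)
    (Eq.trans ?_ h)
  field_simp
  ring

noncomputable def feasibleRounding (β : ℝ) (b K L : ℕ) (c α : ℕ → ℝ) : ℕ → ℝ :=
  rebalance c (L + 1) L (1 / (β * 2 ^ (b + 1))) (roundDown (β * 2 ^ K) L c α)

section FeasibleRounding

variable {β : ℝ} {b K L i : ℕ} {c α : ℕ → ℝ}

lemma feasibleRounding_of_ne (h : i ≠ L) :
    feasibleRounding β b K L c α i = roundDown (β * 2 ^ K) L c α i :=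
  rebalance_apply_of_ne h

lemma feasibleRounding_eq_zero (hαL : ∀ i, L < i → α i = 0) (h : L < i) :
    feasibleRounding β b K L c α i = 0 := by
  rw [feasibleRounding_of_ne h.ne']
  simp [roundDown, not_lt.2 h.le, hαL i h]

lemma sum_feasibleRounding (hcL : c L ≠ 0) :
    ∑ i ∈ range (L + 1), feasibleRounding β b K L c α i * c i / 2 ^ i = 1 / (β * 2 ^ (b + 1)) :=
  sum_rebalance (Nat.lt_succ_self L) hcL

lemma feasibleRounding_self
    (hsum : ∑ i ∈ range (L + 1), α i * c i / 2 ^ i = 1 / (β * 2 ^ (b + 1))) :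
    feasibleRounding β b K L c α L =
      α L + (∑ i ∈ range (L + 1), (α i - roundDown (β * 2 ^ K) L c α i) * c i / 2 ^ i) *
        2 ^ L / c L := by
  have hL : roundDown (β * 2 ^ K) L c α L = α L := if_neg (lt_irrefl L)
  rw [feasibleRounding, rebalance_apply_self, hL, ← hsum, ← sum_sub_distrib]
  simp only [← sub_mul, ← sub_div]

lemma le_feasibleRounding_self (hβ : 0 < β) (hc : ∀ i, 0 ≤ c i) (hα : ∀ i, 0 ≤ α i)
    (hsum : ∑ i ∈ range (L + 1), α i * c i / 2 ^ i = 1 / (β * 2 ^ (b + 1))) :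
    α L ≤ feasibleRounding β b K L c α L := by
  rw [feasibleRounding_self hsum, le_add_iff_nonneg_right]
  have hloss := (sum_sub_roundDown_mem_Icc (L := L) (by positivity : 0 < β * 2 ^ K) hc hα (L + 1)).1
  exact div_nonneg (mul_nonneg hloss (by positivity)) (hc L)

lemma feasibleRounding_self_sub_lt (hβ : 0 < β) (hc : ∀ i, 0 ≤ c i) (hcL : 0 < c L)
    (hα : ∀ i, 0 ≤ α i)
    (hsum : ∑ i ∈ range (L + 1), α i * c i / 2 ^ i = 1 / (β * 2 ^ (b + 1))) {ρ : ℝ}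
    (hcap : 2 ^ (L + 1) < ρ * (c L * (β * 2 ^ K))) :
    feasibleRounding β b K L c α L - α L < ρ := by
  have hu : 0 < β * 2 ^ K := by positivity
  rw [feasibleRounding_self hsum, add_sub_cancel_left, div_lt_iff₀ hcL]
  calc _ ≤ 2 / (β * 2 ^ K) * 2 ^ L := by gcongr; exact (sum_sub_roundDown_mem_Icc hu hc hα _).2
    _ = 2 ^ (L + 1) / (β * 2 ^ K) := by rw [pow_succ]; ring
    _ < ρ * c L := by rw [div_lt_iff₀ hu, mul_assoc]; exact hcap

lemma exists_natCast_eq_feasibleRounding (hβ : 0 < β) (hbK : b + 1 ≤ K) (hc : ∀ i, 0 ≤ c i)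
    (hcL : 0 < c L) (hα : ∀ i, 0 ≤ α i) (hαL : ∀ i, L < i → α i = 0)
    (hsum : ∑ i ∈ range (L + 1), α i * c i / 2 ^ i = 1 / (β * 2 ^ (b + 1))) (i : ℕ) :
    ∃ m : ℕ, feasibleRounding β b K L c α i * c i * (β * 2 ^ K) = m := by
  have hfloor : ∀ i < L, feasibleRounding β b K L c α i * c i * (β * 2 ^ K) =
      ⌊α i * (c i * (β * 2 ^ K))⌋₊ := fun i h => by
    rw [feasibleRounding_of_ne h.ne]
    exact roundDown_mul_of_lt h
  rcases lt_trichotomy i L with h | rfl | h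
  · exact ⟨_, hfloor i h⟩
  · exact exists_natCast_eq_last_of_sum_eq hβ (by omega) _
      (mul_nonneg ((hα i).trans (le_feasibleRounding_self hβ hc hα hsum)) hcL.le)
      hfloor (sum_feasibleRounding hcL.ne')
  · exact ⟨0, by simp [feasibleRounding_eq_zero hαL h]⟩

end FeasibleRounding

lemma eventually_lt_mul_two_pow {c : ℕ → ℝ} {β : ℝ} (hβ : 0 < β) (L : ℕ) (A : ℝ) :
    ∀ᶠ K in atTop, ∀ i ≤ L, 0 < c i → A < c i * (β * 2 ^ K) := by
  have h : ∀ i ∈ range (L + 1), ∀ᶠ K in atTop, 0 < c i → A < c i * (β * 2 ^ K) := by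
    intro i _
    by_cases hci : 0 < c i
    · exact ((((tendsto_pow_atTop_atTop_of_one_lt one_lt_two).const_mul_atTop hβ).const_mul_atTop
        hci).eventually_gt_atTop A).mono fun K hK _ => hK
    · exact Eventually.of_forall fun K h => absurd h hci
  exact ((eventually_all_finset _).2 h).mono fun K hK i hi =>
    hK i (mem_range.2 (Nat.lt_succ_of_le hi))

lemma exists_feasible_rounding {β δ : ℝ} (hβ : 0 < β) (hδ : 0 < δ) {b L : ℕ} {c α : ℕ → ℝ}
    (hc : ∀ i, 0 ≤ c i) (hcL : 0 < c L) (hα : ∀ i, α i ∈ Set.Ico 0 1)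
    (hαL : ∀ i, L < i → α i = 0)
    (hsum : ∑ i ∈ range (L + 1), α i * c i / 2 ^ i = 1 / (β * 2 ^ (b + 1))) :
    ∃ K, ∃ αt : ℕ → ℝ, L ≤ K ∧ (∀ i, αt i ∈ Set.Ico 0 1) ∧ (∀ i, L < i → αt i = 0) ∧
      ∑ i ∈ range (L + 1), αt i * c i / 2 ^ i = 1 / (β * 2 ^ (b + 1)) ∧
      (∀ i, ∃ m : ℕ, αt i * c i * (β * 2 ^ K) = m) ∧ ∀ i ≤ L, 0 < c i → |αt i - α i| ≤ δ := by
  set ρ := min δ (1 - α L)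
  have hρ : 0 < ρ := lt_min hδ (sub_pos.2 (hα L).2)
  obtain ⟨K, hK, hcap⟩ := ((eventually_ge_atTop (max L (b + 1))).and
    (eventually_lt_mul_two_pow (c := c) hβ L (2 ^ (L + 1) / ρ))).exists
  have hu : 0 < β * 2 ^ K := by positivity
  have hcap' : ∀ i ≤ L, 0 < c i → 2 ^ (L + 1) < ρ * (c i * (β * 2 ^ K)) := fun i hi hci =>
    (div_lt_iff₀' hρ).1 (hcap i hi hci)
  have hα0 : ∀ i, 0 ≤ α i := fun i => (hα i).1
  have hlast0 := sub_nonneg.2 (le_feasibleRounding_self (K := K) hβ hc hα0 hsum)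
  have hlast := feasibleRounding_self_sub_lt hβ hc hcL hα0 hsum (hcap' L le_rfl hcL)
  have hround : ∀ i ≠ L, feasibleRounding β b K L c α i ∈ Set.Icc 0 (α i) := fun i hi => by
    rw [feasibleRounding_of_ne hi]
    exact roundDown_mem_Icc hu.le (hc i) (hα0 i)
  refine ⟨K, feasibleRounding β b K L c α, le_of_max_le_left hK, fun i => ?_,
    fun _ => feasibleRounding_eq_zero hαL, sum_feasibleRounding hcL.ne',
    exists_natCast_eq_feasibleRounding hβ (le_of_max_le_right hK) hc hcL hα0 hαL hsum,
    fun i hi hci => ?_⟩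
  · rcases eq_or_ne i L with rfl | hiL
    · exact ⟨by linarith [hα0 i], by linarith [min_le_right δ (1 - α i)]⟩
    · exact ⟨(hround i hiL).1, (hround i hiL).2.trans_lt (hα i).2⟩
  · rcases eq_or_ne i L with rfl | hiL
    · rw [abs_of_nonneg hlast0]
      exact hlast.le.trans (min_le_left _ _)
    · have hloss : α i - feasibleRounding β b K L c α i < ρ := by
        rw [feasibleRounding_of_ne hiL]
        exact lt_of_mul_lt_mul_right ((sub_roundDown_mul_lt_one.trans
          (one_lt_pow₀ one_lt_two L.succ_ne_zero)).trans (hcap' i hi hci)) (mul_nonneg (hc i) hu.le)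
      rw [abs_sub_comm, abs_of_nonneg (sub_nonneg.2 (hround i hiL).2)]
      linarith [min_le_left δ (1 - α L)]

/-- Any `α ∈ A(c,b)` can be approximated in `P(c,·)`-value by a `K`-feasible sequence
in `A^{≤K}(c,b)`, for some `K`. -/
theorem approx_by_feasible_alpha (β : ℝ) (hβ : β ∈ Set.Ico (1 : ℝ) 2)
    (c : ℕ → ℝ) (b : ℕ) (hC : memC β c b) (ε : ℝ) (hε : 0 < ε)
    (α : ℕ → ℝ) (hα : memA β b c α) :
    ∃ K : ℕ, ∃ αt : ℕ → ℝ, memA β b c αt ∧ (∀ i, K < i → αt i = 0) ∧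
      kFeasA β K c αt ∧ |Pfun c α - Pfun c αt| ≤ ε := by
  have hβ0 : 0 < β := one_pos.trans_le hβ.1
  obtain ⟨j, hcj, hαj⟩ := exists_pos_le_half hβ0 hC hα
  obtain ⟨hc01, -, hc1⟩ := hC
  obtain ⟨hα01, hαS⟩ := hα
  have hc : ∀ i, 0 ≤ c i := fun i => (hc01 i).1
  obtain ⟨δ, hδ, hP⟩ := exists_abs_Pfun_sub_le hε
  set δ₁ := min (δ / 2) (1 / 2)
  have hδ₁ : δ₁ ∈ Set.Ioo 0 1 := ⟨by positivity, (min_le_right _ _).trans_lt (by norm_num)⟩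
  obtain ⟨L, hjL, hcL, htail⟩ := exists_pos_tail_le hc hcj (τ := δ₁ * c j / (4 * 2 ^ j))
    (by positivity)
  obtain ⟨α', hα', hα'L, hα'S, hα'α⟩ := exists_truncation hc hc1 hα01 hαS hcj hαj hjL hδ₁ htail
  obtain ⟨K, αt, hLK, hαt, hαtL, hαtS, hfeas, hαtα'⟩ :=
    exists_feasible_rounding hβ0 (half_pos hδ) hc hcL hα' hα'L hα'S
  have hαt01 : ∀ i, αt i ∈ Set.Icc 0 1 := fun i => Set.Ico_subset_Icc_self (hαt i)
  refine ⟨K, αt, ⟨hαt01, ?_⟩, fun i hi => hαtL i (by omega), ⟨hfeas, fun t _ _ => (hαt t).2⟩,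
    hP (L := L) hc hc1 hα01 hαt01 (fun i hi hci => ?_) ?_⟩
  · rw [tsum_eq_sum (s := range (L + 1)) fun i hi => by rw [hαtL i (by simpa using hi)]; simp]
    exact hαtS
  · calc |α i - αt i| ≤ |α i - α' i| + |α' i - αt i| := abs_sub_le _ _ _
      _ ≤ δ / 2 + δ / 2 := by
          rw [abs_sub_comm (α i) (α' i), abs_sub_comm (α' i) (αt i)]
          exact add_le_add ((hα'α i hi).trans (min_le_left _ _)) (hαtα' i hi hci)
      _ = δ := add_halves δ
  · refine htail.trans ((mul_div_four_mul_two_pow_le hδ₁.1.le (hc01 j).2 j).trans ?_)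
    linarith [min_le_left (δ / 2) (1 / 2)]
end

section
/- Let d ≥ 2 and n ≥ 1 be integers, let p_1 ≥ p_2 ≥ … ≥ p_n be a non-increasing list of reals with p_i = d^{−a_i} for some a_i ∈ ℕ for each i, and let a ∈ ℕ with a ≤ a_1. If ∑_{i=1}^n p_i ≥ d^{−a}, then there exists m ≤ n with ∑_{i=1}^m p_i = d^{−a}. If furthermore ∑_{i=1}^n p_i = l·d^{−a} for some l ∈ ℕ, then there exist indices 0 = m_0 < m_1 < … < m_l = n such that ∑_{i=m_{j−1}+1}^{m_j} p_i = d^{−a} for every j ∈ {1,…,l} (i.e., [n] can be divided into l consecutive intervals each of total weight d^{−a}). -/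
/-!
Measure everything in units of `p m`, where `m` is the first index at which the prefix
sums reach `d^{-a}`. Since the `pᵢ` are non-increasing powers of `d⁻¹`, every `pᵢ` with
`i ≤ m`, and `d^{-a}` itself, is a natural multiple of `p m`. The prefix sums before `m`
thus move on the grid `ℕ • p m` and stay below `d^{-a}`, so the step `p m` cannot jump over
the grid point `d^{-a}`. Applying this to the targets `j • d^{-a}`, `j ≤ l`, yields the cut
points `m j`; they are increasing because the prefix sums are strictly increasing.
-/

open Finset AddSubmonoid

theorem Finset.sum_Icc_one_add_sum_Icc {M : Type*} [AddCommMonoid M] (p : ℕ → M) {a b : ℕ}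
    (hab : a ≤ b) :
    ∑ i ∈ Icc 1 a, p i + ∑ i ∈ Icc (a + 1) b, p i = ∑ i ∈ Icc 1 b, p i := by
  simpa only [← Icc_add_one_left_eq_Ioc, zero_add] using sum_Ioc_consecutive p a.zero_le hab

section PrefixSums

variable {M : Type*} [AddCommMonoid M] [LinearOrder M] [IsOrderedCancelAddMonoid M]

theorem add_eq_of_lt_of_le_add_of_mem_multiples {ε x t : M}
    (hx : x ∈ multiples ε) (ht : t ∈ multiples ε) (hlt : x < t) (hle : t ≤ x + ε) :
    x + ε = t := by
  obtain ⟨k, rfl⟩ := (mem_multiples_iff _ _).1 hx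
  obtain ⟨N, rfl⟩ := (mem_multiples_iff _ _).1 ht
  have hε : 0 < ε := by
    by_contra! hε
    exact (hle.trans (add_le_of_nonpos_right hε)).not_gt hlt
  have hkN : k < N := (nsmul_lt_nsmul_iff_left hε).1 hlt
  have hNk : N ≤ k + 1 := (nsmul_le_nsmul_iff_left hε).1 (by rwa [succ_nsmul])
  rw [← succ_nsmul, show N = k + 1 by omega]

variable {p : ℕ → M} {n : ℕ} {t : M}

theorem exists_sum_Icc_eq_of_mem_multiples
    (hp : ∀ i j, 1 ≤ i → i ≤ j → j ≤ n → p i ∈ multiples (p j))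
    (ht : ∀ j, 1 ≤ j → j ≤ n → t ∈ multiples (p j))
    (ht₀ : 0 ≤ t) (h : t ≤ ∑ i ∈ Icc 1 n, p i) :
    ∃ m ≤ n, ∑ i ∈ Icc 1 m, p i = t := by
  classical
  have hex : ∃ m, t ≤ ∑ i ∈ Icc 1 m, p i := ⟨n, h⟩
  have hmn : Nat.find hex ≤ n := Nat.find_min' hex h
  refine ⟨Nat.find hex, hmn, ?_⟩
  have hreach := Nat.find_spec hex
  have hbelow : ∀ k < Nat.find hex, ¬ t ≤ ∑ i ∈ Icc 1 k, p i := fun k => Nat.find_min hex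
  cases hm : Nat.find hex with
  | zero =>
    rw [hm, Icc_eq_empty_of_lt one_pos, sum_empty] at hreach
    rw [Icc_eq_empty_of_lt one_pos, sum_empty]
    exact le_antisymm ht₀ hreach
  | succ k =>
    rw [hm] at hreach hbelow hmn
    rw [sum_Icc_succ_top (by omega)] at hreach ⊢
    refine add_eq_of_lt_of_le_add_of_mem_multiples ?_ (ht _ (by omega) hmn)
      (not_le.1 (hbelow k k.lt_succ_self)) hreach
    exact sum_mem _ fun i hi => hp i _ (mem_Icc.1 hi).1 (by grind) hmn

theorem strictMonoOn_sum_Icc (hp : ∀ i, 1 ≤ i → i ≤ n → 0 < p i) :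
    StrictMonoOn (fun m => ∑ i ∈ Icc 1 m, p i) (Set.Iic n) := by
  intro a _ b hb hab
  dsimp only
  rw [← sum_Icc_one_add_sum_Icc p hab.le]
  refine lt_add_of_pos_right _ (sum_pos (fun i hi => ?_) (nonempty_Icc.2 hab))
  exact hp i (by grind) ((mem_Icc.1 hi).2.trans hb)

theorem exists_partition_sum_Icc_eq_of_mem_multiples
    (hp : ∀ i j, 1 ≤ i → i ≤ j → j ≤ n → p i ∈ multiples (p j))
    (ht : ∀ j, 1 ≤ j → j ≤ n → t ∈ multiples (p j))
    (ht₀ : 0 < t) {l : ℕ} (h : ∑ i ∈ Icc 1 n, p i = l • t) :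
    ∃ m : ℕ → ℕ, m 0 = 0 ∧ m l = n ∧ (∀ j j', j < j' → j' ≤ l → m j < m j') ∧
      ∀ j, 1 ≤ j → j ≤ l → ∑ i ∈ Icc (m (j - 1) + 1) (m j), p i = t := by
  have hpos : ∀ i, 1 ≤ i → i ≤ n → 0 < p i := fun i hi hin => by
    obtain ⟨k, hk⟩ := (mem_multiples_iff _ _).1 (ht i hi hin)
    exact lt_of_not_ge fun hpi => (hk ▸ nsmul_nonpos hpi k).not_gt ht₀
  have hS := strictMonoOn_sum_Icc hpos
  have hcut : ∀ j ≤ l, ∃ m ≤ n, ∑ i ∈ Icc 1 m, p i = j • t := fun j hj =>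
    exists_sum_Icc_eq_of_mem_multiples hp (fun i hi hin => nsmul_mem (ht i hi hin) j)
      (nsmul_nonneg ht₀.le j) (h ▸ nsmul_le_nsmul_left ht₀.le hj)
  choose! m hmn hm using hcut
  have hlt_iff : ∀ j j', j ≤ l → j' ≤ l → (m j < m j' ↔ j < j') := fun j j' hj hj' => by
    rw [← hS.lt_iff_lt (hmn j hj) (hmn j' hj')]
    simp only [hm j hj, hm j' hj', nsmul_lt_nsmul_iff_left ht₀]
  refine ⟨m, ?_, ?_, fun j j' hjj' hj' => (hlt_iff j j' (by omega) hj').2 hjj',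
    fun j hj hjl => ?_⟩
  · refine hS.injOn (hmn 0 l.zero_le) (Set.mem_Iic.2 n.zero_le) ?_
    simp only [hm 0 l.zero_le, zero_nsmul, Icc_eq_empty_of_lt one_pos, sum_empty]
  · exact hS.injOn (hmn l le_rfl) (Set.mem_Iic.2 le_rfl) (by simp only [hm l le_rfl, h])
  · have hsplit := sum_Icc_one_add_sum_Icc p ((hlt_iff (j - 1) j (by omega) hjl).2 (by omega)).le
    have hjt : j • t = (j - 1) • t + t := by rw [← succ_nsmul, Nat.sub_add_cancel hj]
    rw [hm j hjl, hm (j - 1) (by omega), hjt] at hsplit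
    exact add_left_cancel hsplit

end PrefixSums

theorem inv_pow_mem_multiples_of_le {d : ℕ} (hd : 1 < d) {b c : ℕ}
    (h : ((d : ℝ) ^ b)⁻¹ ≤ ((d : ℝ) ^ c)⁻¹) :
    ((d : ℝ) ^ c)⁻¹ ∈ multiples ((d : ℝ) ^ b)⁻¹ := by
  have hd' : (1 : ℝ) < d := by exact_mod_cast hd
  have hcb : c ≤ b := by
    simpa only [inv_inv, pow_le_pow_iff_right₀ hd'] using inv_anti₀ (by positivity) h
  obtain ⟨k, rfl⟩ := Nat.exists_eq_add_of_le hcb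
  refine (mem_multiples_iff _ _).2 ⟨d ^ k, ?_⟩
  rw [nsmul_eq_mul, Nat.cast_pow, pow_add]
  field_simp

theorem useful_lemma_general (d n : ℕ) (hd : 2 ≤ d) (p : ℕ → ℝ) (a : ℕ)
    (hmono : ∀ i j, 1 ≤ i → i ≤ j → j ≤ n → p j ≤ p i)
    (hpow : ∀ i, 1 ≤ i → i ≤ n → ∃ ai : ℕ, p i = ((d : ℝ) ^ ai)⁻¹)
    (ha : ∃ a₁ : ℕ, p 1 = ((d : ℝ) ^ a₁)⁻¹ ∧ a ≤ a₁) :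
    (((d : ℝ) ^ a)⁻¹ ≤ (∑ i ∈ Finset.Icc 1 n, p i) →
      ∃ m : ℕ, m ≤ n ∧ (∑ i ∈ Finset.Icc 1 m, p i) = ((d : ℝ) ^ a)⁻¹) ∧
    (∀ l : ℕ, (∑ i ∈ Finset.Icc 1 n, p i) = l * ((d : ℝ) ^ a)⁻¹ →
      ∃ m : ℕ → ℕ, m 0 = 0 ∧ m l = n ∧
        (∀ j j', j < j' → j' ≤ l → m j < m j') ∧
        ∀ j, 1 ≤ j → j ≤ l →
          (∑ i ∈ Finset.Icc (m (j - 1) + 1) (m j), p i) = ((d : ℝ) ^ a)⁻¹) := by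
  obtain ⟨a₁, hp₁, ha₁⟩ := ha
  have hp : ∀ i j, 1 ≤ i → i ≤ j → j ≤ n → p i ∈ multiples (p j) := by
    intro i j hi hij hjn
    obtain ⟨b, hb⟩ := hpow j (hi.trans hij) hjn
    obtain ⟨c, hc⟩ := hpow i hi (hij.trans hjn)
    have hle := hmono i j hi hij hjn
    rw [hb, hc] at hle ⊢
    exact inv_pow_mem_multiples_of_le hd hle
  have ht : ∀ j, 1 ≤ j → j ≤ n → ((d : ℝ) ^ a)⁻¹ ∈ multiples (p j) := by
    intro j hj hjn
    obtain ⟨b, hb⟩ := hpow j hj hjn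
    rw [hb]
    refine inv_pow_mem_multiples_of_le hd ?_
    calc ((d : ℝ) ^ b)⁻¹ = p j := hb.symm
      _ ≤ p 1 := hmono 1 j le_rfl hj hjn
      _ = ((d : ℝ) ^ a₁)⁻¹ := hp₁
      _ ≤ ((d : ℝ) ^ a)⁻¹ := inv_pow_le_inv_pow_of_le (by norm_cast; omega) ha₁
  refine ⟨exists_sum_Icc_eq_of_mem_multiples hp ht (by positivity), fun l hl => ?_⟩
  exact exists_partition_sum_Icc_eq_of_mem_multiples hp ht (by positivity)
    (by rw [hl, nsmul_eq_mul])

/-- The "useful lemma": for a non-increasing list `p₁ ≥ … ≥ pₙ` of powers `d^{-aᵢ}` with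
`a ≤ a₁`: if `∑ pᵢ ≥ d^{-a}` then some prefix sums to exactly `d^{-a}`; and if moreover
`∑ pᵢ = l·d^{-a}` then `[n]` splits into `l` consecutive intervals of weight `d^{-a}`. -/
theorem useful_lemma (d n : ℕ) (hd : 2 ≤ d) (hn : 1 ≤ n) (p : ℕ → ℝ) (a : ℕ)
    (hmono : ∀ i j, 1 ≤ i → i ≤ j → j ≤ n → p j ≤ p i)
    (hpow : ∀ i, 1 ≤ i → i ≤ n → ∃ ai : ℕ, p i = ((d : ℝ) ^ ai)⁻¹)
    (ha : ∃ a₁ : ℕ, p 1 = ((d : ℝ) ^ a₁)⁻¹ ∧ a ≤ a₁) :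
    (((d : ℝ) ^ a)⁻¹ ≤ (∑ i ∈ Finset.Icc 1 n, p i) →
      ∃ m : ℕ, m ≤ n ∧ (∑ i ∈ Finset.Icc 1 m, p i) = ((d : ℝ) ^ a)⁻¹) ∧
    (∀ l : ℕ, (∑ i ∈ Finset.Icc 1 n, p i) = l * ((d : ℝ) ^ a)⁻¹ →
      ∃ m : ℕ → ℕ, m 0 = 0 ∧ m l = n ∧
        (∀ j j', j < j' → j' ≤ l → m j < m j') ∧
        ∀ j, 1 ≤ j → j ≤ l →
          (∑ i ∈ Finset.Icc (m (j - 1) + 1) (m j), p i) = ((d : ℝ) ^ a)⁻¹) :=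
  useful_lemma_general d n hd p a hmono hpow ha
end

section
/- Let d ≥ 2 and n ≥ 3 be integers such that at least one non-constant d-adic distribution on X_n exists. Then 1/ρ^{(d)}_min(n) ≤ q^{(d)}(n) ≤ 2·n^{2d}·(ln n)/ρ^{(d)}_min(n). -/
/-!
Lower bound: a hitter `Q` meets `Div(μ ∘ σ⁻¹)` for every permutation `σ`, while a fixed ordered
partition of type `k` lies in `Div(μ ∘ σ⁻¹)` for only a `ρ_k(Div μ) ≤ ρ(Div μ)` fraction of all `σ`;
hence `|Q| ⬝ ρ_min ≥ 1`.

Upper bound: greedy set cover. Every non-constant `d`-adic `μ` has a type `k` with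
`ρ_k(Div μ) ≥ ρ_min`, so averaging over the `T ≤ (n+1)^(d-1)` types and the partitions of each type,
some partition divides at least a `ρ_min / T` fraction of any finite family of such `μ`. The exponents
of a `d`-adic distribution on `X_n` are `< n`, so there are at most `(n+1)^n` of them, and the greedy
choice covers them all after about `T ⬝ n ln(n+1) / ρ_min` steps.

Ordered partitions are handled as labelings `X_n → [d]`, on which permutations act with
stabilizers of order `∏ k_j!`.
-/

/-- A `d`-adic distribution on `X_n`: nonnegative, sums to 1, each value `0` or `d^{-ℓ}`, `ℓ ≥ 1`. -/
def IsDadicDist (d n : ℕ) (μ : Fin n → ℝ) : Prop :=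
  (∀ i, 0 ≤ μ i) ∧ (∑ i, μ i) = 1 ∧
  ∀ i, μ i = 0 ∨ ∃ ℓ : ℕ, 1 ≤ ℓ ∧ μ i = ((d : ℝ) ^ ℓ)⁻¹

/-- An ordered partition of `X_n` into `d` pairwise disjoint sets covering `X_n`. -/
def IsOrderedPartition (d n : ℕ) (S : Fin d → Finset (Fin n)) : Prop :=
  (∀ j j', j ≠ j' → Disjoint (S j) (S j')) ∧
  (Finset.univ.biUnion S = Finset.univ)

/-- `S ∈ Div(μ)`: an ordered partition each of whose parts has `μ`-measure `1/d`. -/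
def MemDiv (d n : ℕ) (μ : Fin n → ℝ) (S : Fin d → Finset (Fin n)) : Prop :=
  IsOrderedPartition d n S ∧ ∀ j, (∑ x ∈ S j, μ x) = 1 / (d : ℝ)

/-- A `d`-adic hitter: a collection of ordered partitions meeting `Div(μ)` for
every non-constant `d`-adic distribution `μ` on `X_n`. -/
def IsHitter (d n : ℕ) (Q : Finset (Fin d → Finset (Fin n))) : Prop :=
  (∀ S ∈ Q, IsOrderedPartition d n S) ∧
  ∀ μ : Fin n → ℝ, IsDadicDist d n μ → (∃ i j, μ i ≠ μ j) → ∃ S ∈ Q, MemDiv d n μ S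

/-- `q^{(d)}(n)`: minimum cardinality of a `d`-adic hitter on `X_n`. -/
noncomputable def qd (d n : ℕ) : ℕ :=
  sInf {m | ∃ Q : Finset (Fin d → Finset (Fin n)), IsHitter d n Q ∧ Q.card = m}

/-- `ρ_k(Div(μ))` for a type `k : Fin d → ℕ`. -/
noncomputable def rhoType (d n : ℕ) (μ : Fin n → ℝ) (k : Fin d → ℕ) : ℝ :=
  (({S : Fin d → Finset (Fin n) | MemDiv d n μ S ∧ ∀ j, (S j).card = k j}.ncard : ℝ)) /
    (Nat.multinomial Finset.univ k : ℝ)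

/-- `ρ(Div(μ)) = max over types k of ρ_k(Div(μ))`. -/
noncomputable def rhoDiv (d n : ℕ) (μ : Fin n → ℝ) : ℝ :=
  sSup {r | ∃ k : Fin d → ℕ, (∑ j, k j) = n ∧ r = rhoType d n μ k}

/-- `ρ^{(d)}_min(n)`: minimum of `ρ(Div(μ))` over non-constant `d`-adic `μ` on `X_n`. -/
noncomputable def rhoMinD (d n : ℕ) : ℝ :=
  sInf {r | ∃ μ : Fin n → ℝ, IsDadicDist d n μ ∧ (∃ i j, μ i ≠ μ j) ∧ r = rhoDiv d n μ}


open Finset Equiv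
open scoped Nat

section Fibers

variable {α ι : Type*} [Fintype α] [DecidableEq ι]

def fiberPart (f : α → ι) (i : ι) : Finset α := {a | f a = i}

lemma card_fiberPart (f : α → ι) (i : ι) : #(fiberPart f i) = Fintype.card {a // f a = i} :=
  (Fintype.card_subtype _).symm

lemma exists_perm_comp_eq {f g : α → ι} (h : ∀ i, #(fiberPart f i) = #(fiberPart g i)) :
    ∃ σ : Perm α, f ∘ σ = g :=
  ⟨ofFiberEquiv fun i => Fintype.equivOfCardEq (by rw [← card_fiberPart, ← card_fiberPart, h]),
    funext (ofFiberEquiv_map _)⟩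

variable [Fintype ι]

lemma sum_card_fiberPart (f : α → ι) : ∑ i, #(fiberPart f i) = Fintype.card α :=
  (card_eq_sum_card_fiberwise fun a _ => mem_univ (f a)).symm

variable [DecidableEq α]

def labelingsOfType (k : ι → ℕ) : Finset (α → ι) := {f | ∀ i, #(fiberPart f i) = k i}

lemma card_perm_comp_eq {f g : α → ι} (h : ∀ i, #(fiberPart f i) = #(fiberPart g i)) :
    #{σ : Perm α | f ∘ σ = g} = ∏ i, (#(fiberPart f i))! := by
  obtain ⟨σ₀, rfl⟩ := exists_perm_comp_eq h
  have hstab : #{σ : Perm α | f ∘ σ = f ∘ σ₀} = #{τ : Perm α | f ∘ τ = f} := by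
    refine card_equiv (Equiv.mulRight σ₀⁻¹) fun σ => ?_
    simp only [mem_filter_univ, Equiv.coe_mulRight]
    constructor
    · intro hσ
      calc f ∘ ⇑(σ * σ₀⁻¹) = (f ∘ σ) ∘ ⇑σ₀⁻¹ := rfl
        _ = f := by rw [hσ]; ext; simp
    · intro hτ
      calc f ∘ σ = (f ∘ ⇑(σ * σ₀⁻¹)) ∘ σ₀ := by ext; simp
        _ = f ∘ σ₀ := by rw [hτ]
  rw [hstab, ← Fintype.card_subtype, DomMulAct.stabilizer_card]
  simp only [card_fiberPart]

lemma card_labelingsOfType_le_multinomial (k : ι → ℕ) :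
    #(labelingsOfType k : Finset (α → ι)) ≤ Nat.multinomial univ k := by
  obtain h | ⟨f₀, hf₀⟩ := (labelingsOfType k : Finset (α → ι)).eq_empty_or_nonempty
  · simp [h]
  have hf₀ : ∀ i, #(fiberPart f₀ i) = k i := by simpa [labelingsOfType] using hf₀
  have hsum : ∑ i, k i = Fintype.card α := by simp only [← hf₀, sum_card_fiberPart]
  refine Nat.le_of_mul_le_mul_left (c := ∏ i, (k i)!) ?_ (prod_pos fun i _ => (k i).factorial_pos)
  rw [Nat.multinomial_spec, hsum, mul_comm]
  calc #(labelingsOfType k) * ∏ i, (k i)!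
      = ∑ g ∈ labelingsOfType k, #{σ : Perm α | f₀ ∘ σ = g} := by
        rw [← smul_eq_mul, ← sum_const]
        refine sum_congr rfl fun g hg => ?_
        have hg : ∀ i, #(fiberPart g i) = k i := by simpa [labelingsOfType] using hg
        rw [card_perm_comp_eq fun i => (hf₀ i).trans (hg i).symm]
        simp only [hf₀]
    _ = #{σ : Perm α | f₀ ∘ σ ∈ labelingsOfType k} := sum_card_fiberwise_eq_card_filter _ _ _
    _ ≤ (Fintype.card α)! := (card_filter_le _ _).trans (by rw [card_univ, Fintype.card_perm])

end Fibers

open scoped Classical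

section OrderedPartition

variable {d n : ℕ}

lemma isOrderedPartition_fiberPart (f : Fin n → Fin d) : IsOrderedPartition d n (fiberPart f) :=
  ⟨fun _ _ hjj' => disjoint_filter.mpr fun _ _ hj hj' => hjj' (hj.symm.trans hj'),
    eq_univ_of_forall fun x => mem_biUnion.mpr ⟨f x, mem_univ _, by simp [fiberPart]⟩⟩

lemma exists_fiberPart_eq {S : Fin d → Finset (Fin n)} (hS : IsOrderedPartition d n S) :
    ∃ f : Fin n → Fin d, fiberPart f = S := by
  have hcover : ∀ x, ∃ j, x ∈ S j := fun x => by
    simpa using (hS.2.symm ▸ mem_univ x : x ∈ univ.biUnion S)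
  choose f hf using hcover
  refine ⟨f, funext fun j => ext fun x => ⟨?_, fun hx => ?_⟩⟩
  · simp only [fiberPart, mem_filter_univ]
    rintro rfl
    exact hf x
  · simp only [fiberPart, mem_filter_univ]
    by_contra hne
    exact disjoint_left.mp (hS.1 _ _ hne) (hf x) hx

lemma fiberPart_injective :
    Function.Injective (fiberPart : (Fin n → Fin d) → Fin d → Finset (Fin n)) := by
  intro f g h
  funext x
  have hx : x ∈ fiberPart g (f x) := h ▸ by simp [fiberPart]
  simpa [fiberPart, eq_comm] using hx

lemma memDiv_comp_symm_fiberPart_iff (μ : Fin n → ℝ) (f : Fin n → Fin d) (σ : Perm (Fin n)) :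
    MemDiv d n (μ ∘ σ.symm) (fiberPart f) ↔ MemDiv d n μ (fiberPart (f ∘ σ)) := by
  have hsum : ∀ j, ∑ x ∈ fiberPart (f ∘ σ) j, μ x = ∑ x ∈ fiberPart f j, μ (σ.symm x) :=
    fun j => sum_equiv σ (by simp [fiberPart]) (by simp)
  simp only [MemDiv, isOrderedPartition_fiberPart, true_and, hsum, Function.comp_apply]

lemma card_fiberPart_comp (f : Fin n → Fin d) (σ : Perm (Fin n)) (j : Fin d) :
    #(fiberPart (f ∘ σ) j) = #(fiberPart f j) :=
  card_equiv σ (by simp [fiberPart])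

lemma rhoType_eq (μ : Fin n → ℝ) (k : Fin d → ℕ) :
    rhoType d n μ k =
      (#({f ∈ labelingsOfType k | MemDiv d n μ (fiberPart f)} : Finset (Fin n → Fin d)) : ℝ) /
        Nat.multinomial univ k := by
  have hset : {S : Fin d → Finset (Fin n) | MemDiv d n μ S ∧ ∀ j, #(S j) = k j} =
      fiberPart '' ↑({f ∈ labelingsOfType k | MemDiv d n μ (fiberPart f)} :
        Finset (Fin n → Fin d)) := by
    ext S
    constructor
    · rintro ⟨hS, hk⟩
      obtain ⟨f, rfl⟩ := exists_fiberPart_eq hS.1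
      exact ⟨f, by simp [labelingsOfType, hk, hS], rfl⟩
    · rintro ⟨f, hf, rfl⟩
      simp only [coe_filter, labelingsOfType, mem_filter_univ, Set.mem_ofPred_eq] at hf
      exact ⟨hf.2, hf.1⟩
  rw [rhoType, hset, Set.ncard_image_of_injective _ fiberPart_injective, Set.ncard_coe_finset]

end OrderedPartition

section Rho

variable {d n : ℕ}

lemma rhoType_nonneg (μ : Fin n → ℝ) (k : Fin d → ℕ) : 0 ≤ rhoType d n μ k := by
  rw [rhoType]
  positivity

lemma rhoType_le_one (μ : Fin n → ℝ) (k : Fin d → ℕ) : rhoType d n μ k ≤ 1 := by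
  rw [rhoType_eq, div_le_one (by exact_mod_cast Nat.multinomial_pos _ _)]
  exact_mod_cast (card_filter_le _ _).trans (card_labelingsOfType_le_multinomial k)

lemma exists_fin_sum_eq (hd : 0 < d) (n : ℕ) : ∃ k : Fin d → ℕ, ∑ j, k j = n :=
  ⟨Pi.single ⟨0, hd⟩ n, by simp⟩

lemma rhoType_le_rhoDiv (μ : Fin n → ℝ) {k : Fin d → ℕ} (hk : ∑ j, k j = n) :
    rhoType d n μ k ≤ rhoDiv d n μ :=
  le_csSup ⟨1, by rintro _ ⟨k, -, rfl⟩; exact rhoType_le_one μ k⟩ ⟨k, hk, rfl⟩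

lemma rhoDiv_le_one (hd : 0 < d) (μ : Fin n → ℝ) : rhoDiv d n μ ≤ 1 :=
  let ⟨k, hk⟩ := exists_fin_sum_eq hd n
  csSup_le ⟨_, k, hk, rfl⟩ (by rintro _ ⟨k, -, rfl⟩; exact rhoType_le_one μ k)

lemma rhoDiv_le_sum_rhoType (hd : 0 < d) (μ : Fin n → ℝ) :
    rhoDiv d n μ ≤ ∑ k ∈ Nat.antidiagonalTuple d n, rhoType d n μ k :=
  let ⟨k, hk⟩ := exists_fin_sum_eq hd n
  csSup_le ⟨_, k, hk, rfl⟩ <| by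
    rintro _ ⟨k, hk, rfl⟩
    exact single_le_sum (fun k _ => rhoType_nonneg μ k) (Nat.mem_antidiagonalTuple.mpr hk)

lemma rhoDiv_nonneg (μ : Fin n → ℝ) : 0 ≤ rhoDiv d n μ :=
  Real.sSup_nonneg <| by rintro _ ⟨k, -, rfl⟩; exact rhoType_nonneg μ k

lemma rhoMinD_nonneg : 0 ≤ rhoMinD d n :=
  Real.sInf_nonneg <| by rintro _ ⟨μ, -, -, rfl⟩; exact rhoDiv_nonneg μ

lemma rhoMinD_le_rhoDiv {μ : Fin n → ℝ} (hμ : IsDadicDist d n μ) (hne : ∃ i j, μ i ≠ μ j) :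
    rhoMinD d n ≤ rhoDiv d n μ :=
  csInf_le ⟨0, by rintro _ ⟨μ, -, -, rfl⟩; exact rhoDiv_nonneg μ⟩ ⟨μ, hμ, hne, rfl⟩

end Rho

section LowerBound

variable {d n : ℕ}

lemma IsDadicDist.comp_perm {μ : Fin n → ℝ} (hμ : IsDadicDist d n μ) (σ : Perm (Fin n)) :
    IsDadicDist d n (μ ∘ σ) :=
  ⟨fun _ => hμ.1 _, (Equiv.sum_comp σ μ).trans hμ.2.1, fun _ => hμ.2.2 _⟩

lemma exists_comp_perm_ne {μ : Fin n → ℝ} (hne : ∃ i j, μ i ≠ μ j) (σ : Perm (Fin n)) :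
    ∃ i j, (μ ∘ σ) i ≠ (μ ∘ σ) j :=
  let ⟨i, j, hij⟩ := hne
  ⟨σ.symm i, σ.symm j, by simpa using hij⟩

lemma card_perm_memDiv_comp_symm_le {S : Fin d → Finset (Fin n)} (hS : IsOrderedPartition d n S)
    (μ : Fin n → ℝ) :
    (#{σ : Perm (Fin n) | MemDiv d n (μ ∘ σ.symm) S} : ℝ) ≤ rhoDiv d n μ * n ! := by
  obtain ⟨f, rfl⟩ := exists_fiberPart_eq hS
  set k : Fin d → ℕ := fun j => #(fiberPart f j)
  have hk : ∑ j, k j = n := by simp only [k, sum_card_fiberPart, Fintype.card_fin]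
  set G : Finset (Fin n → Fin d) := {g ∈ labelingsOfType k | MemDiv d n μ (fiberPart g)}
  have hcount : #{σ : Perm (Fin n) | MemDiv d n (μ ∘ σ.symm) (fiberPart f)} =
      #G * ∏ j, (k j)! :=
    calc #{σ : Perm (Fin n) | MemDiv d n (μ ∘ σ.symm) (fiberPart f)}
        = #{σ : Perm (Fin n) | f ∘ σ ∈ G} := by
          simp [memDiv_comp_symm_fiberPart_iff, G, labelingsOfType, card_fiberPart_comp, k]
      _ = ∑ g ∈ G, #{σ : Perm (Fin n) | f ∘ σ = g} :=
          (sum_card_fiberwise_eq_card_filter _ _ _).symm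
      _ = ∑ _g ∈ G, ∏ j, (k j)! := by
          refine sum_congr rfl fun g hg => card_perm_comp_eq fun j => ?_
          simp only [G, labelingsOfType, mem_filter, mem_univ, true_and] at hg
          exact (hg.1 j).symm
      _ = #G * ∏ j, (k j)! := by rw [sum_const, smul_eq_mul]
  have hspec : ((∏ j, (k j)! : ℕ) : ℝ) * Nat.multinomial univ k = n ! := by
    exact_mod_cast hk ▸ Nat.multinomial_spec univ k
  have hG : (#G : ℝ) = rhoType d n μ k * Nat.multinomial univ k := by
    rw [rhoType_eq, div_mul_cancel₀ _ (by exact_mod_cast (Nat.multinomial_pos _ _).ne')]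
  calc (#{σ : Perm (Fin n) | MemDiv d n (μ ∘ σ.symm) (fiberPart f)} : ℝ)
      = rhoType d n μ k * n ! := by
        rw [hcount, Nat.cast_mul, hG, ← hspec]
        ring
    _ ≤ rhoDiv d n μ * n ! := by gcongr; exact rhoType_le_rhoDiv μ hk

lemma one_le_card_mul_rhoDiv {Q : Finset (Fin d → Finset (Fin n))} (hQ : IsHitter d n Q)
    {μ : Fin n → ℝ} (hμ : IsDadicDist d n μ) (hne : ∃ i j, μ i ≠ μ j) :
    1 ≤ (#Q : ℝ) * rhoDiv d n μ := by
  have hcover : (univ : Finset (Perm (Fin n))) ⊆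
      Q.biUnion fun S => {σ : Perm (Fin n) | MemDiv d n (μ ∘ σ.symm) S} := fun σ _ =>
    let ⟨S, hSQ, hS⟩ := hQ.2 _ (hμ.comp_perm σ.symm) (exists_comp_perm_ne hne σ.symm)
    mem_biUnion.mpr ⟨S, hSQ, mem_filter.mpr ⟨mem_univ σ, hS⟩⟩
  have hfac : (n ! : ℝ) ≤ #Q * rhoDiv d n μ * n ! :=
    calc (n ! : ℝ) = #(univ : Finset (Perm (Fin n))) := by simp [Fintype.card_perm]
      _ ≤ ∑ S ∈ Q, (#{σ : Perm (Fin n) | MemDiv d n (μ ∘ σ.symm) S} : ℝ) := by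
          exact_mod_cast (card_le_card hcover).trans card_biUnion_le
      _ ≤ ∑ _S ∈ Q, rhoDiv d n μ * n ! :=
          sum_le_sum fun S hS => card_perm_memDiv_comp_symm_le (hQ.1 S hS) μ
      _ = #Q * rhoDiv d n μ * n ! := by rw [sum_const, nsmul_eq_mul, mul_assoc]
  exact le_of_mul_le_mul_right (by simpa using hfac) (by positivity)

lemma one_le_card_mul_rhoMinD {Q : Finset (Fin d → Finset (Fin n))} (hQ : IsHitter d n Q)
    (hex : ∃ μ : Fin n → ℝ, IsDadicDist d n μ ∧ ∃ i j, μ i ≠ μ j) :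
    1 ≤ (#Q : ℝ) * rhoMinD d n := by
  obtain ⟨μ₀, hμ₀, hne₀⟩ := hex
  have hQ₀ : (0 : ℝ) < #Q := by
    by_contra! h
    have := one_le_card_mul_rhoDiv hQ hμ₀ hne₀
    rw [le_antisymm h (Nat.cast_nonneg _), zero_mul] at this
    linarith
  rw [← div_le_iff₀' hQ₀]
  refine le_csInf ⟨_, μ₀, hμ₀, hne₀, rfl⟩ ?_
  rintro _ ⟨μ, hμ, hne, rfl⟩
  rw [div_le_iff₀' hQ₀]
  exact one_le_card_mul_rhoDiv hQ hμ hne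

end LowerBound

section GreedyStep

variable {d n : ℕ}

lemma sum_rhoType_le_of_isMax (R : Finset (Fin n → ℝ)) (k : Fin d → ℕ) {f₀ : Fin n → Fin d}
    (hf₀ : ∀ f, #{μ ∈ R | MemDiv d n μ (fiberPart f)} ≤ #{μ ∈ R | MemDiv d n μ (fiberPart f₀)}) :
    ∑ μ ∈ R, rhoType d n μ k ≤ #{μ ∈ R | MemDiv d n μ (fiberPart f₀)} := by
  set c := #{μ ∈ R | MemDiv d n μ (fiberPart f₀)}
  have hdouble : ∑ μ ∈ R, #{f ∈ labelingsOfType k | MemDiv d n μ (fiberPart f)} ≤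
      #(labelingsOfType k : Finset (Fin n → Fin d)) * c :=
    calc ∑ μ ∈ R, #{f ∈ labelingsOfType k | MemDiv d n μ (fiberPart f)}
        = ∑ f ∈ labelingsOfType k, #{μ ∈ R | MemDiv d n μ (fiberPart f)} :=
          sum_card_bipartiteAbove_eq_sum_card_bipartiteBelow _
      _ ≤ ∑ _f ∈ labelingsOfType k, c := sum_le_sum fun f _ => hf₀ f
      _ = _ := by rw [sum_const, smul_eq_mul]
  simp_rw [rhoType_eq, ← sum_div]
  rw [div_le_iff₀ (by exact_mod_cast Nat.multinomial_pos _ _), mul_comm]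
  calc ∑ μ ∈ R, (#{f ∈ labelingsOfType k | MemDiv d n μ (fiberPart f)} : ℝ)
      ≤ #(labelingsOfType k : Finset (Fin n → Fin d)) * c := by exact_mod_cast hdouble
    _ ≤ Nat.multinomial univ k * c := by
        gcongr
        exact_mod_cast card_labelingsOfType_le_multinomial k

lemma exists_isOrderedPartition_le_card_memDiv (hd : 0 < d) (R : Finset (Fin n → ℝ))
    (hR : ∀ μ ∈ R, IsDadicDist d n μ ∧ ∃ i j, μ i ≠ μ j) :
    ∃ S, IsOrderedPartition d n S ∧
      rhoMinD d n / #(Nat.antidiagonalTuple d n) * #R ≤ #{μ ∈ R | MemDiv d n μ S} := by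
  have : Nonempty (Fin d) := ⟨⟨0, hd⟩⟩
  obtain ⟨f₀, -, hf₀⟩ := exists_max_image univ
    (fun f : Fin n → Fin d => #{μ ∈ R | MemDiv d n μ (fiberPart f)}) univ_nonempty
  refine ⟨fiberPart f₀, isOrderedPartition_fiberPart f₀, ?_⟩
  have hT : (0 : ℝ) < #(Nat.antidiagonalTuple d n) := by
    obtain ⟨k, hk⟩ := exists_fin_sum_eq hd n
    exact_mod_cast card_pos.mpr ⟨k, Nat.mem_antidiagonalTuple.mpr hk⟩
  rw [div_mul_eq_mul_div, div_le_iff₀ hT]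
  calc rhoMinD d n * #R = ∑ _μ ∈ R, rhoMinD d n := by rw [sum_const, nsmul_eq_mul, mul_comm]
    _ ≤ ∑ μ ∈ R, ∑ k ∈ Nat.antidiagonalTuple d n, rhoType d n μ k := sum_le_sum fun μ hμ =>
        (rhoMinD_le_rhoDiv (hR μ hμ).1 (hR μ hμ).2).trans (rhoDiv_le_sum_rhoType hd μ)
    _ = ∑ k ∈ Nat.antidiagonalTuple d n, ∑ μ ∈ R, rhoType d n μ k := sum_comm
    _ ≤ ∑ _k ∈ Nat.antidiagonalTuple d n, (#{μ ∈ R | MemDiv d n μ (fiberPart f₀)} : ℝ) :=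
        sum_le_sum fun k _ => sum_rhoType_le_of_isMax R k fun f => hf₀ f (mem_univ f)
    _ = _ := by rw [sum_const, nsmul_eq_mul, mul_comm]

end GreedyStep

section SetCover

variable {α β : Type*} (U : Finset α) (B : Finset β) (r : β → α → Prop) {p : ℝ}

lemma exists_card_uncovered_le (hp : ∀ R ⊆ U, ∃ b ∈ B, p * #R ≤ #{a ∈ R | r b a}) (t : ℕ) :
    ∃ Q ⊆ B, #Q ≤ t ∧
      (#{a ∈ U | ∀ b ∈ Q, ¬ r b a} : ℝ) ≤ Real.exp (-(p * t)) * #U := by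
  induction t with
  | zero => exact ⟨∅, empty_subset _, le_rfl, by simp⟩
  | succ t ih =>
    obtain ⟨Q, hQB, hQt, hQ⟩ := ih
    set R := {a ∈ U | ∀ b ∈ Q, ¬ r b a}
    obtain ⟨b, hbB, hb⟩ := hp R (filter_subset _ _)
    refine ⟨insert b Q, insert_subset hbB hQB, (card_insert_le _ _).trans (by omega), ?_⟩
    have hrest : {a ∈ U | ∀ b' ∈ insert b Q, ¬ r b' a} = {a ∈ R | ¬ r b a} := by
      ext a
      simp only [R, mem_filter, forall_mem_insert]
      tauto
    have hsplit : (#{a ∈ R | ¬ r b a} : ℝ) = #R - #{a ∈ R | r b a} := by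
      rw [eq_sub_iff_add_eq, add_comm]
      exact_mod_cast card_filter_add_card_filter_not _
    calc (#{a ∈ U | ∀ b' ∈ insert b Q, ¬ r b' a} : ℝ)
        = #R - #{a ∈ R | r b a} := by rw [hrest, hsplit]
      _ ≤ (1 - p) * #R := by linarith
      _ ≤ Real.exp (-p) * #R := by gcongr; linarith [Real.add_one_le_exp (-p)]
      _ ≤ Real.exp (-p) * (Real.exp (-(p * t)) * #U) := by gcongr
      _ = Real.exp (-(p * ↑(t + 1))) * #U := by
        rw [← mul_assoc, ← Real.exp_add]
        push_cast
        ring_nf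

lemma exists_cover_card_le (hp₀ : 0 < p) (hp : ∀ R ⊆ U, ∃ b ∈ B, p * #R ≤ #{a ∈ R | r b a}) :
    ∃ Q ⊆ B, (#Q : ℝ) ≤ Real.log #U / p + 1 ∧ ∀ a ∈ U, ∃ b ∈ Q, r b a := by
  -- after `t > log |U| / p` rounds fewer than one element is left uncovered
  set t := ⌊Real.log #U / p⌋₊ + 1
  obtain ⟨Q, hQB, hQt, hQ⟩ := exists_card_uncovered_le U B r hp t
  refine ⟨Q, hQB, ?_, ?_⟩
  · calc (#Q : ℝ) ≤ t := by exact_mod_cast hQt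
      _ ≤ Real.log #U / p + 1 := by
        push_cast [t]
        linarith [Nat.floor_le (div_nonneg (Real.log_natCast_nonneg #U) hp₀.le)]
  have huncovered : #{a ∈ U | ∀ b ∈ Q, ¬ r b a} = 0 := by
    obtain hU | hU := (#U).eq_zero_or_pos
    · exact Nat.eq_zero_of_le_zero (hU ▸ card_filter_le _ _)
    have hlog : Real.log #U < p * t := by
      rw [← div_lt_iff₀' hp₀]
      exact_mod_cast Nat.lt_floor_add_one (Real.log #U / p)
    have hlt : Real.exp (-(p * t)) * #U < 1 := by
      calc Real.exp (-(p * t)) * #U < Real.exp (-Real.log #U) * #U := by gcongr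
        _ = 1 := by rw [Real.exp_neg, Real.exp_log (by positivity), inv_mul_cancel₀ (by positivity)]
    exact Nat.lt_one_iff.mp (by exact_mod_cast hQ.trans_lt hlt)
  intro a ha
  by_contra! hna
  exact notMem_empty a (card_eq_zero.mp huncovered ▸ mem_filter.mpr ⟨ha, hna⟩)

end SetCover

section DadicExponents

lemma dvd_count_of_pow_succ_dvd_sum {d a : ℕ} (hd : 0 < d) {M : Multiset ℕ}
    (hmin : ∀ b ∈ M, a ≤ b) (h : d ^ (a + 1) ∣ (M.map (d ^ ·)).sum) : d ∣ M.count a := by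
  have hrest : d ^ (a + 1) ∣ ((M.filter (· ≠ a)).map (d ^ ·)).sum := by
    refine Multiset.dvd_sum fun x hx => ?_
    obtain ⟨b, hb, rfl⟩ := Multiset.mem_map.mp hx
    obtain ⟨hbM, hba⟩ := Multiset.mem_filter.mp hb
    exact pow_dvd_pow d (by have := hmin b hbM; omega)
  rw [← Multiset.filter_add_not (· = a) M, Multiset.filter_eq', Multiset.map_add,
    Multiset.sum_add, Multiset.map_replicate, Multiset.sum_replicate, smul_eq_mul] at h
  have : d ^ a * d ∣ d ^ a * M.count a := by
    rw [← pow_succ, mul_comm]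
    exact (Nat.dvd_add_left hrest).mp h
  exact Nat.dvd_of_mul_dvd_mul_left (pow_pos hd a) this

/-- The smallest power occurs a multiple of `d` times, so `d` copies of it merge into the next
power; induct on the number of terms. -/
lemma lt_add_card_of_pow_dvd_sum {d K : ℕ} (hd : 2 ≤ d) (M : Multiset ℕ)
    (hM : d ^ K ∣ (M.map (d ^ ·)).sum) {a : ℕ} (ha : a ∈ M) : K < a + Multiset.card M := by
  induction hm : Multiset.card M using Nat.strong_induction_on generalizing M a with
  | _ m ih =>
  have hpos : 0 < Multiset.card M := Multiset.card_pos_iff_exists_mem.mpr ⟨a, ha⟩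
  by_cases hKa : K ≤ a
  · omega
  obtain ⟨a₀, ha₀, hmin⟩ : ∃ a₀ ∈ M, ∀ b ∈ M, a₀ ≤ b :=
    ⟨M.toFinset.min' ⟨a, Multiset.mem_toFinset.mpr ha⟩,
      Multiset.mem_toFinset.mp (min'_mem _ _),
      fun b hb => min'_le _ _ (Multiset.mem_toFinset.mpr hb)⟩
  have ha₀a : a₀ ≤ a := hmin a ha
  have hcount : d ≤ M.count a₀ :=
    Nat.le_of_dvd (Multiset.count_pos.mpr ha₀) <| dvd_count_of_pow_succ_dvd_sum (by omega) hmin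
      ((pow_dvd_pow d (by omega)).trans hM)
  have hle : Multiset.replicate d a₀ ≤ M := Multiset.le_count_iff_replicate_le.mp hcount
  set M' := (a₀ + 1) ::ₘ (M - Multiset.replicate d a₀)
  have hcard : Multiset.card M' + (d - 1) = Multiset.card M := by
    have := Multiset.card_le_card hle
    simp only [M', Multiset.card_cons, Multiset.card_sub hle, Multiset.card_replicate] at this ⊢
    omega
  have hsum : (M'.map (d ^ ·)).sum = (M.map (d ^ ·)).sum := by
    conv_rhs => rw [← tsub_add_cancel_of_le hle]
    simp only [M', Multiset.map_cons, Multiset.sum_cons, Multiset.map_add, Multiset.sum_add,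
      Multiset.map_replicate, Multiset.sum_replicate, smul_eq_mul, pow_succ]
    ring
  have := ih _ (by omega) M' (hsum ▸ hM) (Multiset.mem_cons_self _ _) rfl
  omega

end DadicExponents

section DadicCandidates

variable {d n : ℕ}

lemma IsDadicDist.exponent_lt (hd : 2 ≤ d) {μ : Fin n → ℝ} (hμ : IsDadicDist d n μ) {i : Fin n}
    {ℓ : ℕ} (hi : μ i = ((d : ℝ) ^ ℓ)⁻¹) : ℓ < n := by
  have hexp : ∀ j, ∃ e : ℕ, μ j ≠ 0 → μ j = ((d : ℝ) ^ e)⁻¹ := fun j =>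
    (hμ.2.2 j).elim (fun h => ⟨0, fun h' => (h' h).elim⟩) fun ⟨e, _, he⟩ => ⟨e, fun _ => he⟩
  choose e he using hexp
  -- scaling `∑ μ = 1` by `d ^ L`, `L` the largest exponent, gives an identity in `ℕ`
  set P : Finset (Fin n) := {j | μ j ≠ 0}
  set L := P.sup e
  have hiP : i ∈ P := mem_filter.mpr ⟨mem_univ i, by rw [hi]; positivity⟩
  have hei : e i = ℓ := Nat.pow_right_injective hd <| by
    exact_mod_cast inv_inj.mp ((he i (mem_filter.mp hiP).2).symm.trans hi)
  have hsum : ∑ j ∈ P, d ^ (L - e j) = d ^ L := by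
    have hreal : ∑ j ∈ P, (d : ℝ) ^ (L - e j) = (d : ℝ) ^ L :=
      calc ∑ j ∈ P, (d : ℝ) ^ (L - e j) = ∑ j ∈ P, (d : ℝ) ^ L * μ j := by
            refine sum_congr rfl fun j hj => ?_
            have hd0 : (d : ℝ) ≠ 0 := by positivity
            rw [he j (mem_filter.mp hj).2, ← div_eq_mul_inv, eq_div_iff (pow_ne_zero _ hd0),
              ← pow_add, Nat.sub_add_cancel (le_sup hj)]
        _ = (d : ℝ) ^ L := by rw [← mul_sum, sum_filter_ne_zero, hμ.2.1, mul_one]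
    exact_mod_cast hreal
  have hlt := lt_add_card_of_pow_dvd_sum hd (K := L) (P.val.map fun j => L - e j)
    (by rw [Multiset.map_map, ← sum_eq_multiset_sum]; exact hsum ▸ dvd_rfl)
    (Multiset.mem_map_of_mem _ hiP)
  have hP : #P ≤ n := (card_filter_le _ _).trans (card_fin n).le
  have hiL : e i ≤ L := le_sup hiP
  rw [Multiset.card_map, card_val] at hlt
  omega

noncomputable def dadicValues (d n : ℕ) : Finset ℝ := insert 0 ((range n).image fun ℓ => ((d : ℝ) ^ ℓ)⁻¹)

lemma card_dadicValues_le : #(dadicValues d n) ≤ n + 1 :=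
  (card_insert_le _ _).trans (by simpa using card_image_le (s := range n))

lemma IsDadicDist.mem_piFinset_dadicValues (hd : 2 ≤ d) {μ : Fin n → ℝ}
    (hμ : IsDadicDist d n μ) : μ ∈ Fintype.piFinset fun _ => dadicValues d n := by
  refine Fintype.mem_piFinset.mpr fun i => ?_
  obtain h | ⟨ℓ, -, h⟩ := hμ.2.2 i
  · exact h ▸ mem_insert_self _ _
  · exact mem_insert_of_mem (mem_image.mpr ⟨ℓ, mem_range.mpr (hμ.exponent_lt hd h), h.symm⟩)

end DadicCandidates

lemma card_antidiagonalTuple_succ_le (e n : ℕ) :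
    #(Nat.antidiagonalTuple (e + 1) n) ≤ (n + 1) ^ e := by
  have hmaps : ∀ k ∈ Nat.antidiagonalTuple (e + 1) n,
      Fin.init k ∈ Fintype.piFinset fun _ : Fin e => range (n + 1) := fun k hk =>
    Fintype.mem_piFinset.mpr fun i => by
      rw [mem_range, Nat.lt_succ_iff, ← Nat.mem_antidiagonalTuple.mp hk]
      exact single_le_sum (fun _ _ => Nat.zero_le _) (mem_univ i.castSucc)
  have hinj : Set.InjOn (Fin.init : (Fin (e + 1) → ℕ) → Fin e → ℕ)
      ↑(Nat.antidiagonalTuple (e + 1) n) := fun k hk k' hk' h => by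
    have hlast : k (Fin.last e) = k' (Fin.last e) := by
      have hk := Nat.mem_antidiagonalTuple.mp hk
      have hk' := Nat.mem_antidiagonalTuple.mp hk'
      rw [Fin.sum_univ_castSucc] at hk hk'
      have : ∑ i : Fin e, k i.castSucc = ∑ i : Fin e, k' i.castSucc := congrArg (∑ i, · i) h
      omega
    rw [← Fin.snoc_init_self k, ← Fin.snoc_init_self k', h, hlast]
  calc #(Nat.antidiagonalTuple (e + 1) n)
      ≤ #(Fintype.piFinset fun _ : Fin e => range (n + 1)) := card_le_card_of_injOn _ hmaps hinj
    _ = (n + 1) ^ e := by simp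

lemma add_one_pow_mul_log_add_one_le {n : ℕ} (hn : 3 ≤ n) (e : ℕ) :
    ((n : ℝ) + 1) ^ e * (n * Real.log (n + 1)) + 1 ≤ 2 * (n : ℝ) ^ (2 * (e + 1)) * Real.log n := by
  have hn' : (3 : ℝ) ≤ n := by exact_mod_cast hn
  have hsq : (n : ℝ) + 1 ≤ (n : ℝ) ^ 2 := by nlinarith
  have hlog : 1 ≤ Real.log n := by
    rw [Real.le_log_iff_exp_le (by positivity)]
    linarith [Real.exp_one_lt_d9]
  have hlog' : Real.log (n + 1) ≤ 2 * Real.log n := by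
    calc Real.log (n + 1) ≤ Real.log ((n : ℝ) ^ 2) := Real.log_le_log (by positivity) hsq
      _ = 2 * Real.log n := by rw [Real.log_pow]; push_cast; ring
  have hpow : ((n : ℝ) + 1) ^ e ≤ (n : ℝ) ^ (2 * e) := by
    rw [pow_mul]
    gcongr
  have hP : (1 : ℝ) ≤ (n : ℝ) ^ (2 * e) := one_le_pow₀ (by linarith)
  calc ((n : ℝ) + 1) ^ e * (n * Real.log (n + 1)) + 1
      ≤ (n : ℝ) ^ (2 * e) * (n * (2 * Real.log n)) + 1 := by
        gcongr
        exact mul_nonneg (Nat.cast_nonneg _) (Real.log_nonneg (by linarith))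
    _ ≤ 2 * (n : ℝ) ^ (2 * (e + 1)) * Real.log n := by
      rw [show 2 * (e + 1) = 2 * e + 2 by ring, pow_add]
      nlinarith [mul_le_mul hP hlog zero_le_one (by positivity)]

section UpperBound

variable {d n : ℕ}

lemma exists_isHitter_card_mul_rhoMinD_le (hd : 2 ≤ d) (hn : 3 ≤ n) (hρ : 0 < rhoMinD d n)
    (hρ₁ : rhoMinD d n ≤ 1) :
    ∃ Q, IsHitter d n Q ∧ (#Q : ℝ) * rhoMinD d n ≤ 2 * (n : ℝ) ^ (2 * d) * Real.log n := by
  set U : Finset (Fin n → ℝ) := {μ ∈ Fintype.piFinset fun _ => dadicValues d n |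
    IsDadicDist d n μ ∧ ∃ i j, μ i ≠ μ j}
  set T := #(Nat.antidiagonalTuple d n)
  obtain ⟨e, rfl⟩ : ∃ e, d = e + 1 := ⟨d - 1, by omega⟩
  have hT : (0 : ℝ) < T := by
    obtain ⟨k, hk⟩ := exists_fin_sum_eq e.succ_pos n
    exact_mod_cast card_pos.mpr ⟨k, Nat.mem_antidiagonalTuple.mpr hk⟩
  obtain ⟨Q, hQB, hQcard, hQcover⟩ := exists_cover_card_le U {S | IsOrderedPartition (e + 1) n S}
    (fun S μ => MemDiv (e + 1) n μ S) (div_pos hρ hT) fun R hR => by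
      obtain ⟨S, hS, h⟩ := exists_isOrderedPartition_le_card_memDiv (by omega) R
        fun μ hμ => (mem_filter.mp (hR hμ)).2
      exact ⟨S, mem_filter.mpr ⟨mem_univ S, hS⟩, h⟩
  refine ⟨Q, ⟨fun S hS => (mem_filter.mp (hQB hS)).2, fun μ hμ hne =>
    hQcover μ (mem_filter.mpr ⟨hμ.mem_piFinset_dadicValues hd, hμ, hne⟩)⟩, ?_⟩
  have hU : Real.log #U ≤ n * Real.log (n + 1) := by
    obtain hU | hU := (#U).eq_zero_or_pos
    · rw [hU, Nat.cast_zero, Real.log_zero]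
      exact mul_nonneg (Nat.cast_nonneg _) (Real.log_nonneg (by linarith))
    have hcard : #U ≤ (n + 1) ^ n :=
      (card_filter_le _ _).trans <| by
        rw [Fintype.card_piFinset_const]
        exact Nat.pow_le_pow_left card_dadicValues_le n
    calc Real.log #U ≤ Real.log (((n : ℝ) + 1) ^ n) :=
          Real.log_le_log (by exact_mod_cast hU) (by exact_mod_cast hcard)
      _ = n * Real.log (n + 1) := Real.log_pow _ _
  have hTle : (T : ℝ) ≤ ((n : ℝ) + 1) ^ e := by exact_mod_cast card_antidiagonalTuple_succ_le e n
  calc (#Q : ℝ) * rhoMinD (e + 1) n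
      ≤ (Real.log #U / (rhoMinD (e + 1) n / T) + 1) * rhoMinD (e + 1) n := by gcongr
    _ = T * Real.log #U + rhoMinD (e + 1) n := by field_simp
    _ ≤ ((n : ℝ) + 1) ^ e * (n * Real.log (n + 1)) + 1 := by gcongr
    _ ≤ 2 * (n : ℝ) ^ (2 * (e + 1)) * Real.log n := add_one_pow_mul_log_add_one_le hn e

end UpperBound

lemma qd_le_card {d n : ℕ} {Q : Finset (Fin d → Finset (Fin n))} (hQ : IsHitter d n Q) :
    qd d n ≤ #Q :=
  Nat.sInf_le ⟨Q, hQ, rfl⟩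

lemma exists_isHitter_card_eq_qd {d n : ℕ} {Q : Finset (Fin d → Finset (Fin n))}
    (hQ : IsHitter d n Q) : ∃ Q', IsHitter d n Q' ∧ #Q' = qd d n :=
  Nat.sInf_mem (s := {m | ∃ Q : Finset (Fin d → Finset (Fin n)), IsHitter d n Q ∧ #Q = m})
    ⟨_, Q, hQ, rfl⟩

lemma qd_eq_zero_of_forall_not_isHitter {d n : ℕ} (h : ∀ Q, ¬ IsHitter d n Q) : qd d n = 0 := by
  rw [qd, Nat.sInf_eq_zero]
  right
  ext m
  simp [h]

/-- `1/ρ^{(d)}_min(n) ≤ q^{(d)}(n) ≤ 2 n^{2d} ln n / ρ^{(d)}_min(n)`. -/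
theorem qd_rho_reduction (d n : ℕ) (hd : 2 ≤ d) (hn : 3 ≤ n)
    (hex : ∃ μ : Fin n → ℝ, IsDadicDist d n μ ∧ ∃ i j, μ i ≠ μ j) :
    1 / rhoMinD d n ≤ (qd d n : ℝ) ∧
    (qd d n : ℝ) ≤ 2 * (n : ℝ) ^ (2 * d) * Real.log n / rhoMinD d n := by
  obtain hρ | hρ := (rhoMinD_nonneg (d := d) (n := n)).eq_or_lt
  -- `ρ_min = 0` rules out hitters, so `qd = sInf ∅ = 0` and both bounds hold with `x / 0 = 0`
  · have hq : qd d n = 0 := qd_eq_zero_of_forall_not_isHitter fun Q hQ => by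
      have := one_le_card_mul_rhoMinD hQ hex
      rw [← hρ, mul_zero] at this
      linarith
    simp [hq, ← hρ]
  obtain ⟨μ, hμ, hne⟩ := hex
  have hρ₁ : rhoMinD d n ≤ 1 := (rhoMinD_le_rhoDiv hμ hne).trans (rhoDiv_le_one (by omega) μ)
  obtain ⟨Q, hQ, hQρ⟩ := exists_isHitter_card_mul_rhoMinD_le hd hn hρ hρ₁
  obtain ⟨Q', hQ', hQ'card⟩ := exists_isHitter_card_eq_qd hQ
  constructor
  · rw [div_le_iff₀ hρ, ← hQ'card]
    exact one_le_card_mul_rhoMinD hQ' ⟨μ, hμ, hne⟩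
  · rw [le_div_iff₀ hρ]
    exact (mul_le_mul_of_nonneg_right (by exact_mod_cast qd_le_card hQ) hρ.le).trans hQρ
end
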